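/- arXiv:1910.13273 — 7 statements merged into one kernel-verified Lean document; each statement's English description precedes it below -/
import Mathlib

section
/- Let f : [a,b] → ℝ be a continuous piecewise linear function with finitely many faces (lₖ, hₖ), k = 1,…,N, where lₖ > 0 is the length and hₖ ∈ ℝ the height of the k-th face. Among all functions f_π : [a,b] → ℝ obtained from f by rearranging its faces via a permutation π of {1,…,N}, starting at value f(a), the arrangement π* that sorts faces by nondecreasing slope hₖ/lₖ yields the unique convex function f_{π*} in this family, and f ≥ f_{π*} pointwise on [a,b]. -/
open Finset

/-- The continuous piecewise linear function on `[a,b]` starting at value `f0` obtained by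
laying the faces `(l (π k), h (π k))` end to end in the order `k = 0, 1, …, N-1`. -/
noncomputable def faceArrange {N : ℕ} (a f0 : ℝ) (l h : Fin N → ℝ)
    (π : Equiv.Perm (Fin N)) : ℝ → ℝ :=
  fun t => f0 + ∑ k : Fin N,
    h (π k) * min (max (t - (a + ∑ j ∈ Finset.Iio k, l (π j))) 0 / l (π k)) 1

noncomputable def pwLnat {N : ℕ} (l : Fin N → ℝ) (π : Equiv.Perm (Fin N)) (k : ℕ) : ℝ :=
  if hk : k < N then l (π ⟨k, hk⟩) else 0

noncomputable def pwNode {N : ℕ} (a : ℝ) (l : Fin N → ℝ) (π : Equiv.Perm (Fin N)) (m : ℕ) : ℝ :=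
  a + ∑ j ∈ Finset.range m, pwLnat l π j

noncomputable def pwS {N : ℕ} (l h : Fin N → ℝ) (π : Equiv.Perm (Fin N)) (k : ℕ) : ℝ :=
  if hk : min k (N - 1) < N then h (π ⟨min k (N - 1), hk⟩) / l (π ⟨min k (N - 1), hk⟩) else 0

lemma pwLnat_eval {N : ℕ} (l : Fin N → ℝ) (π : Equiv.Perm (Fin N)) {k : ℕ} (hk : k < N) :
    pwLnat l π k = l (π ⟨k, hk⟩) := dif_pos hk

lemma pwLnat_nonneg {N : ℕ} {l : Fin N → ℝ} (hl : ∀ k, 0 < l k) (π : Equiv.Perm (Fin N)) (k : ℕ) :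
    0 ≤ pwLnat l π k := by
  unfold pwLnat; split
  · exact (hl _).le
  · exact le_refl 0

lemma pwS_eval {N : ℕ} (l h : Fin N → ℝ) (π : Equiv.Perm (Fin N)) {k : ℕ} (hk : k < N) :
    pwS l h π k = h (π ⟨k, hk⟩) / l (π ⟨k, hk⟩) := by
  have hm : min k (N - 1) = k := min_eq_left (Nat.le_pred_of_lt hk)
  unfold pwS
  rw [dif_pos (by omega)]
  congr 1 <;> · congr 1; exact Fin.ext (by simp [hm])

lemma pwS_mono {N : ℕ} {l h : Fin N → ℝ} {π : Equiv.Perm (Fin N)}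
    (hsorted : ∀ j k : Fin N, j ≤ k → h (π j) / l (π j) ≤ h (π k) / l (π k))
    (hN : 0 < N) {k k' : ℕ} (hkk : k ≤ k') : pwS l h π k ≤ pwS l h π k' := by
  unfold pwS
  rw [dif_pos (by omega), dif_pos (by omega)]
  exact hsorted _ _ (by simp [Fin.le_def]; omega)

lemma pwNode_zero {N : ℕ} (a : ℝ) (l : Fin N → ℝ) (π : Equiv.Perm (Fin N)) :
    pwNode a l π 0 = a := by simp [pwNode]

lemma pwNode_succ {N : ℕ} (a : ℝ) (l : Fin N → ℝ) (π : Equiv.Perm (Fin N)) (m : ℕ) :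
    pwNode a l π (m + 1) = pwNode a l π m + pwLnat l π m := by
  simp [pwNode, Finset.sum_range_succ]; ring

lemma pwNode_mono {N : ℕ} (a : ℝ) {l : Fin N → ℝ} (hl : ∀ k, 0 < l k) (π : Equiv.Perm (Fin N))
    {m m' : ℕ} (hmm : m ≤ m') : pwNode a l π m ≤ pwNode a l π m' := by
  unfold pwNode
  have := Finset.sum_le_sum_of_subset_of_nonneg (Finset.range_subset_range.2 hmm)
    (fun k _ _ => pwLnat_nonneg hl π k)
  linarith

lemma pwNode_last {N : ℕ} (a b : ℝ) {l : Fin N → ℝ} (π : Equiv.Perm (Fin N))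
    (hlen : ∑ k, l k = b - a) : pwNode a l π N = b := by
  have : ∑ j ∈ Finset.range N, pwLnat l π j = ∑ j : Fin N, l (π j) := by
    rw [← Fin.sum_univ_eq_sum_range]
    exact Finset.sum_congr rfl fun j _ => by rw [pwLnat_eval l π j.isLt]
  rw [pwNode, this, Equiv.sum_comp π l, hlen]; ring

lemma face_term (h t c L : ℝ) (hL : 0 < L) :
    h * min (max (t - c) 0 / L) 1 = h / L * (min t (c + L) - min t c) := by
  have key : min (max (t - c) 0) L = min t (c + L) - min t c := by
    rcases le_total t c with h1 | h1
    · rw [max_eq_right (by linarith), min_eq_left hL.le, min_eq_left (by linarith : t ≤ c + L),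
        min_eq_left h1]; ring
    · rw [max_eq_left (by linarith), min_eq_right h1]
      rcases le_total t (c + L) with h2 | h2
      · rw [min_eq_left (by linarith : t - c ≤ L), min_eq_left h2]
      · rw [min_eq_right (by linarith : L ≤ t - c), min_eq_right h2]; ring
  have : min (max (t - c) 0 / L) 1 = min (max (t - c) 0) L / L := by
    rw [← div_self (ne_of_gt hL), min_div_div_right hL.le]
  rw [this, key]; ring

lemma abel_id (n : ℕ) (s m : ℕ → ℝ) :
    ∑ k ∈ range n, s k * (m (k + 1) - m k) =
      s n * m n - s 0 * m 0 - ∑ k ∈ range n, (s (k + 1) - s k) * m (k + 1) := by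
  induction n with
  | zero => simp
  | succ n ih => simp [Finset.sum_range_succ, ih]; ring

lemma iio_sum {N : ℕ} (l : Fin N → ℝ) (π : Equiv.Perm (Fin N)) (k : Fin N) :
    ∑ j ∈ Finset.Iio k, l (π j) = ∑ j ∈ range k.val, pwLnat l π j := by
  rw [← Nat.Iio_eq_range, ← Fin.map_valEmbedding_Iio, Finset.sum_map]
  exact Finset.sum_congr rfl fun j _ => by
    simp only [Fin.valEmbedding_apply, pwLnat_eval l π j.isLt]

lemma faceArrange_rep {N : ℕ} (a f0 : ℝ) {l : Fin N → ℝ} (h : Fin N → ℝ) (hl : ∀ k, 0 < l k)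
    (π : Equiv.Perm (Fin N)) (t : ℝ) :
    faceArrange a f0 l h π t = f0 + ∑ k ∈ range N,
      pwS l h π k * (min t (pwNode a l π (k + 1)) - min t (pwNode a l π k)) := by
  unfold faceArrange
  congr 1
  rw [← Fin.sum_univ_eq_sum_range
    (fun k => pwS l h π k * (min t (pwNode a l π (k + 1)) - min t (pwNode a l π k))) N]
  refine Finset.sum_congr rfl fun k _ => ?_
  rw [iio_sum, face_term _ _ _ _ (hl (π k)), pwS_eval l h π k.isLt]
  have h1 : pwNode a l π (k.val + 1) = (a + ∑ j ∈ range k.val, pwLnat l π j) + l (π k) := by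
    rw [pwNode_succ, pwLnat_eval l π k.isLt]; rfl
  rw [h1]
  rfl

lemma greedy_min {N : ℕ} (a b f0 : ℝ) {l : Fin N → ℝ} (h : Fin N → ℝ) (hl : ∀ k, 0 < l k)
    (hN : 0 < N) (hlen : ∑ k, l k = b - a)
    (π' : Equiv.Perm (Fin N))
    (hsorted : ∀ j k : Fin N, j ≤ k → h (π' j) / l (π' j) ≤ h (π' k) / l (π' k))
    (t : ℝ) (ht : a ≤ t) (ht' : t ≤ b)
    (w : Fin N → ℝ) (hw0 : ∀ k, 0 ≤ w k) (hwl : ∀ k, w k ≤ l k)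
    (hwsum : ∑ k, w k = t - a) :
    faceArrange a f0 l h π' t ≤ f0 + ∑ k, h k / l k * w k := by
  classical
  set W : ℕ → ℝ := fun k => if hk : k < N then w (π' ⟨k, hk⟩) else 0 with hW
  set D : ℕ → ℝ := fun m => (∑ j ∈ range m, W j) - (min t (pwNode a l π' m) - a) with hD
  have hWsum : ∑ j ∈ range N, W j = t - a := by
    rw [← Fin.sum_univ_eq_sum_range]
    have : ∀ j : Fin N, W j.val = w (π' j) := fun j => by simp [hW, dif_pos j.isLt]
    rw [Finset.sum_congr rfl fun j _ => this j, Equiv.sum_comp π' w, hwsum]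
  have hrhs : ∑ k, h k / l k * w k = ∑ k ∈ range N, pwS l h π' k * W k := by
    rw [← Equiv.sum_comp π' (fun k => h k / l k * w k), ← Fin.sum_univ_eq_sum_range]
    exact Finset.sum_congr rfl fun k _ => by
      rw [pwS_eval l h π' k.isLt]; simp [hW, dif_pos k.isLt]
  have hD0 : D 0 = 0 := by simp [hD, pwNode_zero, min_eq_right ht]
  have hDN : D N = 0 := by
    simp only [hD, pwNode_last a b π' hlen, hWsum, min_eq_left ht']; ring
  have hDle : ∀ m, m ≤ N → D m ≤ 0 := by
    intro m hm
    have h1 : ∑ j ∈ range m, W j ≤ ∑ j ∈ range m, pwLnat l π' j := by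
      refine Finset.sum_le_sum fun j _ => ?_
      by_cases hj : j < N
      · simp only [hW, pwLnat, dif_pos hj]; exact hwl _
      · simp only [hW, pwLnat, dif_neg hj]; exact le_refl 0
    have h2 : ∑ j ∈ range m, W j ≤ t - a := by
      rw [← hWsum]
      refine Finset.sum_le_sum_of_subset_of_nonneg (Finset.range_subset_range.2 hm) fun j _ _ => ?_
      by_cases hj : j < N
      · simp only [hW, dif_pos hj]; exact hw0 _
      · simp only [hW, dif_neg hj]; exact le_refl 0
    have hnode : pwNode a l π' m - a = ∑ j ∈ range m, pwLnat l π' j := by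
      simp [pwNode]
    have h3 : ∑ j ∈ range m, W j ≤ min t (pwNode a l π' m) - a := by
      rcases le_total t (pwNode a l π' m) with hc | hc
      · rw [min_eq_left hc]; linarith
      · rw [min_eq_right hc]; linarith
    simp only [hD]; linarith
  have key : 0 ≤ ∑ k ∈ range N,
      pwS l h π' k * (W k - (min t (pwNode a l π' (k + 1)) - min t (pwNode a l π' k))) := by
    have e : ∀ k, W k - (min t (pwNode a l π' (k + 1)) - min t (pwNode a l π' k))
        = D (k + 1) - D k := by
      intro k; simp only [hD, Finset.sum_range_succ]; ring
    rw [Finset.sum_congr rfl fun k _ => by rw [e k]]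
    rw [abel_id N (pwS l h π') D, hD0, hDN]
    have : ∑ k ∈ range N, (pwS l h π' (k + 1) - pwS l h π' k) * D (k + 1) ≤ 0 := by
      refine Finset.sum_nonpos fun k hk => ?_
      refine mul_nonpos_of_nonneg_of_nonpos ?_ (hDle (k + 1) (Finset.mem_range.1 hk))
      have := pwS_mono hsorted hN (Nat.le_succ k)
      linarith
    linarith
  rw [faceArrange_rep a f0 h hl π' t, hrhs]
  have expand : ∑ k ∈ range N,
      pwS l h π' k * (W k - (min t (pwNode a l π' (k + 1)) - min t (pwNode a l π' k)))
      = ∑ k ∈ range N, pwS l h π' k * W k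
        - ∑ k ∈ range N, pwS l h π' k * (min t (pwNode a l π' (k + 1)) - min t (pwNode a l π' k)) := by
    rw [← Finset.sum_sub_distrib]
    exact Finset.sum_congr rfl fun k _ => by ring
  linarith

lemma min_concave_comb {x y p q : ℝ} (A : ℝ) (hp : 0 ≤ p) (hq : 0 ≤ q) (hpq : p + q = 1) :
    p * min x A + q * min y A ≤ min (p * x + q * y) A := by
  refine le_min ?_ ?_
  · have h1 : p * min x A ≤ p * x := mul_le_mul_of_nonneg_left (min_le_left x A) hp
    have h2 : q * min y A ≤ q * y := mul_le_mul_of_nonneg_left (min_le_left y A) hq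
    linarith
  · have h1 : p * min x A ≤ p * A := mul_le_mul_of_nonneg_left (min_le_right x A) hp
    have h2 : q * min y A ≤ q * A := mul_le_mul_of_nonneg_left (min_le_right y A) hq
    have h3 : p * A + q * A = A := by rw [← add_mul, hpq, one_mul]
    linarith

lemma faceArrange_convex {N : ℕ} (a b f0 : ℝ) {l : Fin N → ℝ} (h : Fin N → ℝ)
    (hl : ∀ k, 0 < l k) (hlen : ∑ k, l k = b - a)
    (π' : Equiv.Perm (Fin N))
    (hsorted : ∀ j k : Fin N, j ≤ k → h (π' j) / l (π' j) ≤ h (π' k) / l (π' k))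
    (hN : 0 < N) :
    ConvexOn ℝ (Set.Icc a b) (faceArrange a f0 l h π') := by
  classical
  set S := pwS l h π' with hS
  set A := pwNode a l π' with hA
  set G : ℝ → ℝ := fun t => f0 + S N * t - S 0 * a
      - ∑ k ∈ range N, (S (k + 1) - S k) * min t (A (k + 1)) with hG
  have hGconv : ConvexOn ℝ (Set.Icc a b) G := by
    refine ⟨convex_Icc a b, fun x _ y _ p q hp hq hpq => ?_⟩
    simp only [hG, smul_eq_mul]
    have hminle : ∀ k ∈ range N,
        (S (k + 1) - S k) * (p * min x (A (k + 1)) + q * min y (A (k + 1)))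
          ≤ (S (k + 1) - S k) * min (p * x + q * y) (A (k + 1)) := by
      intro k _
      refine mul_le_mul_of_nonneg_left (min_concave_comb _ hp hq hpq) ?_
      have := pwS_mono hsorted hN (Nat.le_succ k)
      simp only [hS]; linarith
    have hsum := Finset.sum_le_sum hminle
    have e1 : ∑ k ∈ range N,
        (S (k + 1) - S k) * (p * min x (A (k + 1)) + q * min y (A (k + 1)))
        = p * ∑ k ∈ range N, (S (k + 1) - S k) * min x (A (k + 1))
          + q * ∑ k ∈ range N, (S (k + 1) - S k) * min y (A (k + 1)) := by
      rw [Finset.mul_sum, Finset.mul_sum, ← Finset.sum_add_distrib]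
      exact Finset.sum_congr rfl fun k _ => by ring
    rw [e1] at hsum
    have expand : p * (f0 + S N * x - S 0 * a
          - ∑ k ∈ range N, (S (k + 1) - S k) * min x (A (k + 1)))
        + q * (f0 + S N * y - S 0 * a
          - ∑ k ∈ range N, (S (k + 1) - S k) * min y (A (k + 1)))
        = (p + q) * f0 + S N * (p * x + q * y) - (p + q) * (S 0 * a)
          - (p * ∑ k ∈ range N, (S (k + 1) - S k) * min x (A (k + 1))
            + q * ∑ k ∈ range N, (S (k + 1) - S k) * min y (A (k + 1))) := by ring
    rw [expand, hpq]
    linarith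
  refine hGconv.congr fun t ht => ?_
  rw [faceArrange_rep a f0 h hl π' t]
  have := abel_id N S (fun j => min t (A j))
  simp only [hG]
  rw [this]
  have h1 : A N = b := pwNode_last a b π' hlen
  have h2 : A 0 = a := pwNode_zero a l π'
  rw [h1, h2, min_eq_left ht.2, min_eq_right ht.1]
  ring

lemma vol_bound {N : ℕ} (c l : Fin N → ℝ)
    (hdisj : Pairwise fun j k => Disjoint (Set.Ioo (c j) (c j + l j)) (Set.Ioo (c k) (c k + l k)))
    (u v : ℝ) (huv : u ≤ v) (μval : Fin N → ℝ) (hval : ∀ k, 0 ≤ μval k)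
    (hvol : ∀ k, MeasureTheory.volume (Set.Ioo (c k) (c k + l k) ∩ Set.Ioo u v)
      = ENNReal.ofReal (μval k)) :
    ∑ k, μval k ≤ v - u := by
  classical
  set S : Fin N → Set ℝ := fun k => Set.Ioo (c k) (c k + l k) ∩ Set.Ioo u v with hSdef
  have hd : Set.PairwiseDisjoint (↑(Finset.univ : Finset (Fin N))) S := by
    intro j _ k _ hjk
    exact (hdisj hjk).mono Set.inter_subset_left Set.inter_subset_left
  have hmeas : ∀ k ∈ (Finset.univ : Finset (Fin N)), MeasurableSet (S k) :=
    fun k _ => (measurableSet_Ioo).inter measurableSet_Ioo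
  have hchain : ENNReal.ofReal (∑ k, μval k) ≤ ENNReal.ofReal (v - u) := by
    calc ENNReal.ofReal (∑ k, μval k) = ∑ k, ENNReal.ofReal (μval k) :=
          ENNReal.ofReal_sum_of_nonneg fun k _ => hval k
      _ = ∑ k, MeasureTheory.volume (S k) := by
          exact Finset.sum_congr rfl fun k _ => (hvol k).symm
      _ = MeasureTheory.volume (⋃ k ∈ (Finset.univ : Finset (Fin N)), S k) :=
          (MeasureTheory.measure_biUnion_finset hd hmeas).symm
      _ ≤ MeasureTheory.volume (Set.Ioo u v) := by
          refine MeasureTheory.measure_mono ?_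
          exact Set.iUnion₂_subset fun k _ => Set.inter_subset_right
      _ = ENNReal.ofReal (v - u) := Real.volume_Ioo
  exact (ENNReal.ofReal_le_ofReal_iff (by linarith)).1 hchain

lemma sum_mu {N : ℕ} {a b : ℝ} {l : Fin N → ℝ} {c : Fin N → ℝ}
    (hl : ∀ k, 0 < l k) (hc₁ : ∀ k, a ≤ c k) (hc₂ : ∀ k, c k + l k ≤ b)
    (hdisj : Pairwise fun j k => Disjoint (Set.Ioo (c j) (c j + l j)) (Set.Ioo (c k) (c k + l k)))
    (hlen : ∑ k, l k = b - a) (t : ℝ) (ht : a ≤ t) (ht' : t ≤ b) :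
    ∑ k, (min t (c k + l k) - min t (c k)) = t - a := by
  have hμ0 : ∀ k : Fin N, 0 ≤ min t (c k + l k) - min t (c k) := by
    intro k
    have := min_le_min (le_refl t) (by linarith [hl k] : c k ≤ c k + l k)
    linarith
  have hμl : ∀ k : Fin N, min t (c k + l k) - min t (c k) ≤ l k := by
    intro k
    rcases le_total t (c k) with hc | hc
    · rw [min_eq_left (by linarith [hl k] : t ≤ c k + l k), min_eq_left hc]
      linarith [hl k]
    · rw [min_eq_right hc]
      have := min_le_right t (c k + l k)
      linarith
  have hvol1 : ∀ k : Fin N, MeasureTheory.volume (Set.Ioo (c k) (c k + l k) ∩ Set.Ioo a t)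
      = ENNReal.ofReal (min t (c k + l k) - min t (c k)) := by
    intro k
    rw [Set.Ioo_inter_Ioo, max_eq_left (hc₁ k), Real.volume_Ioo]
    rcases le_total t (c k) with hc | hc
    · rw [min_eq_left (by linarith [hl k] : t ≤ c k + l k), min_eq_left hc]
      rw [min_eq_right (by linarith [hl k] : t ≤ c k + l k)]
      rw [show t - t = (0:ℝ) by ring, ENNReal.ofReal_zero,
        ENNReal.ofReal_eq_zero.2 (by linarith)]
    · rw [min_eq_right hc]
      congr 1
      rw [min_comm]
  have hvol2 : ∀ k : Fin N, MeasureTheory.volume (Set.Ioo (c k) (c k + l k) ∩ Set.Ioo t b)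
      = ENNReal.ofReal (l k - (min t (c k + l k) - min t (c k))) := by
    intro k
    rw [Set.Ioo_inter_Ioo, min_eq_left (hc₂ k), Real.volume_Ioo]
    rcases le_total t (c k) with hc | hc
    · rw [max_eq_left hc, min_eq_left (by linarith [hl k] : t ≤ c k + l k), min_eq_left hc]
      congr 1; ring
    · rw [max_eq_right hc, min_eq_right hc]
      rcases le_total t (c k + l k) with hc2 | hc2
      · rw [min_eq_left hc2]
        congr 1; ring
      · rw [min_eq_right hc2]
        rw [ENNReal.ofReal_eq_zero.2 (by linarith), ENNReal.ofReal_eq_zero.2 (by linarith)]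
  have key1 := vol_bound c l hdisj a t ht _ hμ0 hvol1
  have key2 := vol_bound c l hdisj t b ht' _ (fun k => by linarith [hμl k]) hvol2
  have hsplit : ∑ k : Fin N, (l k - (min t (c k + l k) - min t (c k)))
      = (b - a) - ∑ k : Fin N, (min t (c k + l k) - min t (c k)) := by
    rw [Finset.sum_sub_distrib, hlen]
  rw [hsplit] at key2
  linarith

noncomputable def pwH {N : ℕ} (h : Fin N → ℝ) (π : Equiv.Perm (Fin N)) (j : ℕ) : ℝ :=
  if hj : j < N then h (π ⟨j, hj⟩) else 0

lemma faceArrange_node {N : ℕ} (a f0 : ℝ) {l : Fin N → ℝ} (h : Fin N → ℝ) (hl : ∀ k, 0 < l k)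
    (π : Equiv.Perm (Fin N)) {m : ℕ} (hm : m ≤ N) :
    faceArrange a f0 l h π (pwNode a l π m) = f0 + ∑ j ∈ range m, pwH h π j := by
  unfold faceArrange
  congr 1
  have hterm : ∀ k : Fin N,
      h (π k) * min (max (pwNode a l π m - (a + ∑ j ∈ Finset.Iio k, l (π j))) 0 / l (π k)) 1
        = (fun j : ℕ => if j < m then pwH h π j else 0) k.val := by
    intro k
    have hiio : a + ∑ j ∈ Finset.Iio k, l (π j) = pwNode a l π k.val := by
      rw [iio_sum]; rfl
    rw [hiio]
    by_cases hkm : k.val < m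
    · have h1 : pwNode a l π k.val + l (π k) ≤ pwNode a l π m := by
        have := pwNode_mono a hl π (show k.val + 1 ≤ m from hkm)
        rw [pwNode_succ, pwLnat_eval l π k.isLt, Fin.eta] at this
        exact this
      have h2 : max (pwNode a l π m - pwNode a l π k.val) 0
          = pwNode a l π m - pwNode a l π k.val := max_eq_left (by linarith [hl (π k)])
      rw [h2, min_eq_right (by rw [le_div_iff₀ (hl (π k))]; linarith)]
      simp only [hkm, if_pos, pwH, dif_pos k.isLt, Fin.eta, mul_one]
    · have h1 : pwNode a l π m ≤ pwNode a l π k.val :=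
        pwNode_mono a hl π (Nat.le_of_not_lt hkm)
      rw [max_eq_right (by linarith), zero_div, min_eq_left zero_le_one]
      simp [hkm]
  rw [Finset.sum_congr rfl fun k _ => hterm k,
    Fin.sum_univ_eq_sum_range (fun j => if j < m then pwH h π j else 0) N]
  rw [Finset.range_eq_Ico, ← Finset.sum_Ico_consecutive _ (Nat.zero_le m) hm]
  have e1 : ∑ j ∈ Finset.Ico 0 m, (if j < m then pwH h π j else 0) = ∑ j ∈ range m, pwH h π j := by
    rw [← Finset.range_eq_Ico]
    exact Finset.sum_congr rfl fun j hj => if_pos (Finset.mem_range.1 hj)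
  have e2 : ∑ j ∈ Finset.Ico m N, (if j < m then pwH h π j else 0) = 0 :=
    Finset.sum_eq_zero fun j hj => if_neg (by have := (Finset.mem_Ico.1 hj).1; omega)
  rw [e1, e2, add_zero, Finset.range_eq_Ico]

lemma adj_slope {N : ℕ} (a b f0 : ℝ) {l : Fin N → ℝ} (h : Fin N → ℝ) (hl : ∀ k, 0 < l k)
    (hlen : ∑ k, l k = b - a) (π : Equiv.Perm (Fin N))
    (hconv : ConvexOn ℝ (Set.Icc a b) (faceArrange a f0 l h π))
    (m m' : Fin N) (hmm : m.val + 1 = m'.val) :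
    h (π m) / l (π m) ≤ h (π m') / l (π m') := by
  have hm2 : m.val + 2 ≤ N := by omega
  set u := l (π m) with hu
  set v := l (π m') with hv
  have hu0 : 0 < u := hl (π m)
  have hv0 : 0 < v := hl (π m')
  have huv : 0 < u + v := by linarith
  set x := pwNode a l π m.val with hx
  set y := pwNode a l π (m.val + 1) with hy
  set z := pwNode a l π (m.val + 2) with hz
  have hxa : a ≤ x := by
    have := pwNode_mono a hl π (Nat.zero_le m.val); rwa [pwNode_zero] at this
  have hxb : x ≤ b := by
    have := pwNode_mono a hl π (show m.val ≤ N by omega)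
    rwa [pwNode_last a b π hlen] at this
  have hza : a ≤ z := by
    have := pwNode_mono a hl π (Nat.zero_le (m.val + 2)); rwa [pwNode_zero] at this
  have hzb : z ≤ b := by
    have := pwNode_mono a hl π hm2
    rwa [pwNode_last a b π hlen] at this
  have hyx : y = x + u := by
    rw [hy, pwNode_succ, pwLnat_eval l π m.isLt, Fin.eta]
  have hzy : z = y + v := by
    rw [hz, hy, show m.val + 2 = (m.val + 1) + 1 by ring, pwNode_succ,
      pwLnat_eval l π (show m.val + 1 < N by omega)]
    have efin : (⟨m.val + 1, show m.val + 1 < N by omega⟩ : Fin N) = m' := Fin.ext hmm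
    rw [efin]
  set F := ∑ j ∈ range m.val, pwH h π j with hF
  have hfx : faceArrange a f0 l h π x = f0 + F :=
    faceArrange_node a f0 h hl π (by omega)
  have hfy : faceArrange a f0 l h π y = f0 + F + h (π m) := by
    rw [hy, faceArrange_node a f0 h hl π (show m.val + 1 ≤ N by omega),
      Finset.sum_range_succ]
    simp only [pwH, dif_pos m.isLt, Fin.eta, hF]; ring
  have hfz : faceArrange a f0 l h π z = f0 + F + h (π m) + h (π m') := by
    rw [hz, faceArrange_node a f0 h hl π hm2, Finset.sum_range_succ, Finset.sum_range_succ]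
    have e1 : pwH h π m.val = h (π m) := by
      simp only [pwH, dif_pos m.isLt, Fin.eta]
    have e2 : pwH h π (m.val + 1) = h (π m') := by
      simp only [pwH, dif_pos (show m.val + 1 < N by omega)]
      have efin : (⟨m.val + 1, show m.val + 1 < N by omega⟩ : Fin N) = m' := Fin.ext hmm
      rw [efin]
    rw [e1, e2, hF]; ring
  set p := v / (u + v) with hp
  set q := u / (u + v) with hq
  have hp0 : 0 ≤ p := by positivity
  have hq0 : 0 ≤ q := by positivity
  have hpq : p + q = 1 := by
    rw [hp, hq, ← add_div, add_comm v u]; exact div_self huv.ne'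
  have hcomb : p • x + q • z = y := by
    simp only [smul_eq_mul]
    have hz2 : z = x + (u + v) := by rw [hzy, hyx]; ring
    rw [hz2, hyx, hp, hq]; field_simp; ring
  have hcx := hconv.2 (Set.mem_Icc.2 ⟨hxa, hxb⟩) (Set.mem_Icc.2 ⟨hza, hzb⟩) hp0 hq0 hpq
  rw [hcomb] at hcx
  simp only [smul_eq_mul] at hcx
  rw [hfx, hfy, hfz] at hcx
  have hsum1 : p * (f0 + F) + q * (f0 + F) = f0 + F := by
    rw [← add_mul, hpq, one_mul]
  have e : p * (f0 + F) + q * (f0 + F + h (π m) + h (π m'))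
      = (p * (f0 + F) + q * (f0 + F)) + q * h (π m) + q * h (π m') := by ring
  rw [e, hsum1] at hcx
  have h5 : h (π m) ≤ q * h (π m) + q * h (π m') := by linarith
  have hq' : q * (u + v) = u := by rw [hq]; field_simp
  have h6 : h (π m) * (u + v) ≤ (q * h (π m) + q * h (π m')) * (u + v) :=
    mul_le_mul_of_nonneg_right h5 huv.le
  have e2 : (q * h (π m) + q * h (π m')) * (u + v)
      = h (π m) * (q * (u + v)) + h (π m') * (q * (u + v)) := by ring
  rw [e2, hq'] at h6
  rw [div_le_div_iff₀ hu0 hv0]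
  nlinarith [h6]

lemma sorted_of_convex {N : ℕ} (a b f0 : ℝ) {l : Fin N → ℝ} (h : Fin N → ℝ) (hl : ∀ k, 0 < l k)
    (hlen : ∑ k, l k = b - a) (π : Equiv.Perm (Fin N))
    (hconv : ConvexOn ℝ (Set.Icc a b) (faceArrange a f0 l h π)) :
    ∀ j k : Fin N, j ≤ k → h (π j) / l (π j) ≤ h (π k) / l (π k) := by
  have step : ∀ d : ℕ, ∀ j k : Fin N, j.val + d = k.val →
      h (π j) / l (π j) ≤ h (π k) / l (π k) := by
    intro d
    induction d with
    | zero =>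
      intro j k hjk
      have : j = k := Fin.ext (by omega)
      rw [this]
    | succ d ih =>
      intro j k hjk
      have hd : j.val + d < N := by have := k.isLt; omega
      refine le_trans (ih j ⟨j.val + d, hd⟩ rfl) ?_
      exact adj_slope a b f0 h hl hlen π hconv ⟨j.val + d, hd⟩ k (by simp; omega)
  intro j k hjk
  exact step (k.val - j.val) j k (by have := Fin.le_def.1 hjk; omega)

lemma min_shift (t x L : ℝ) (hL : 0 ≤ L) : min t (x + L) - min t x ≤ L := by
  rcases le_total t x with hc | hc
  · rw [min_eq_left (by linarith), min_eq_left hc]; linarith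
  · rw [min_eq_right hc]; have := min_le_right t (x + L); linarith

lemma min_shift0 (t x L : ℝ) (hL : 0 ≤ L) : 0 ≤ min t (x + L) - min t x := by
  have := min_le_min (le_refl t) (by linarith : x ≤ x + L)
  linarith

lemma faceArrange_weights {N : ℕ} (a b f0 : ℝ) {l : Fin N → ℝ} (h : Fin N → ℝ)
    (hl : ∀ k, 0 < l k) (hlen : ∑ k, l k = b - a) (π : Equiv.Perm (Fin N))
    (t : ℝ) (ht : a ≤ t) (ht' : t ≤ b) :
    ∃ w : Fin N → ℝ, (∀ k, 0 ≤ w k) ∧ (∀ k, w k ≤ l k) ∧ (∑ k, w k = t - a) ∧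
      faceArrange a f0 l h π t = f0 + ∑ k, h k / l k * w k := by
  classical
  set w : Fin N → ℝ := fun k =>
    min t (pwNode a l π ((π.symm k).val + 1)) - min t (pwNode a l π (π.symm k).val) with hwdef
  have hnode : ∀ k : Fin N,
      pwNode a l π ((π.symm k).val + 1) = pwNode a l π (π.symm k).val + l k := by
    intro k
    rw [pwNode_succ, pwLnat_eval l π (π.symm k).isLt, Fin.eta, Equiv.apply_symm_apply]
  have hw0 : ∀ k, 0 ≤ w k := by
    intro k
    simp only [hwdef, hnode k]
    exact min_shift0 t _ _ (hl k).le
  have hwl : ∀ k, w k ≤ l k := by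
    intro k
    simp only [hwdef, hnode k]
    exact min_shift t _ _ (hl k).le
  have hwπ : ∀ k : Fin N, w (π k)
      = min t (pwNode a l π (k.val + 1)) - min t (pwNode a l π k.val) := by
    intro k
    simp only [hwdef, Equiv.symm_apply_apply]
  have hwsum : ∑ k, w k = t - a := by
    rw [← Equiv.sum_comp π w, Finset.sum_congr rfl fun k _ => hwπ k,
      Fin.sum_univ_eq_sum_range
        (fun k => min t (pwNode a l π (k + 1)) - min t (pwNode a l π k)) N,
      Finset.sum_range_sub (fun m => min t (pwNode a l π m)),
      pwNode_last a b π hlen, pwNode_zero, min_eq_left ht', min_eq_right ht]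
  refine ⟨w, hw0, hwl, hwsum, ?_⟩
  rw [faceArrange_rep a f0 h hl π t]
  congr 1
  rw [← Equiv.sum_comp π (fun k => h k / l k * w k)]
  rw [← Fin.sum_univ_eq_sum_range
    (fun k => pwS l h π k * (min t (pwNode a l π (k + 1)) - min t (pwNode a l π k))) N]
  refine (Finset.sum_congr rfl fun k _ => ?_).symm
  rw [pwS_eval l h π k.isLt, Fin.eta, hwπ k]

/-- **Sorting the faces by slope yields the unique convex rearrangement, which minorizes
the original function.**  Let `f` be a continuous piecewise linear function on `[a,b]`
with finitely many faces `(lₖ, hₖ)` (lengths `lₖ > 0`, heights `hₖ`), occupying pairwise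
disjoint intervals `(cₖ, cₖ + lₖ)` of total length `b - a`.  If `π*` sorts the faces by
nondecreasing slope `hₖ/lₖ`, then the rearranged function `f_{π*}` is convex on `[a,b]`,
satisfies `f ≥ f_{π*}` pointwise on `[a,b]`, and is the unique convex function among all
rearrangements `f_π` of the faces of `f` starting at `f(a)`. -/
theorem faceArrange_sorted_convex_minorizes
    {N : ℕ} (a b f0 : ℝ) (hab : a < b)
    (l h : Fin N → ℝ) (c : Fin N → ℝ)
    (hl : ∀ k, 0 < l k)
    (hc₁ : ∀ k, a ≤ c k) (hc₂ : ∀ k, c k + l k ≤ b)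
    (hdisj : Pairwise fun j k => Disjoint (Set.Ioo (c j) (c j + l j)) (Set.Ioo (c k) (c k + l k)))
    (hlen : ∑ k, l k = b - a)
    (f : ℝ → ℝ)
    (hf : ∀ t, f t = f0 + ∑ k : Fin N, h k * min (max (t - c k) 0 / l k) 1)
    (π' : Equiv.Perm (Fin N))
    (hsorted : ∀ j k : Fin N, j ≤ k → h (π' j) / l (π' j) ≤ h (π' k) / l (π' k)) :
    ConvexOn ℝ (Set.Icc a b) (faceArrange a f0 l h π') ∧
    (∀ t ∈ Set.Icc a b, faceArrange a f0 l h π' t ≤ f t) ∧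
    (∀ π : Equiv.Perm (Fin N), ConvexOn ℝ (Set.Icc a b) (faceArrange a f0 l h π) →
      ∀ t ∈ Set.Icc a b, faceArrange a f0 l h π t = faceArrange a f0 l h π' t) := by
  have hN : 0 < N := by
    rcases Nat.eq_zero_or_pos N with h0 | h0
    · exfalso; subst h0; simp at hlen; linarith
    · exact h0
  refine ⟨faceArrange_convex a b f0 h hl hlen π' hsorted hN, ?_, ?_⟩
  · rintro t ⟨ht1, ht2⟩
    have hf_eq : f t = f0 + ∑ k, h k / l k * (min t (c k + l k) - min t (c k)) := by
      rw [hf t]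
      congr 1
      exact Finset.sum_congr rfl fun k _ => face_term (h k) t (c k) (l k) (hl k)
    rw [hf_eq]
    refine greedy_min a b f0 h hl hN hlen π' hsorted t ht1 ht2 _
      (fun k => min_shift0 t _ _ (hl k).le) (fun k => min_shift t _ _ (hl k).le)
      (sum_mu hl hc₁ hc₂ hdisj hlen t ht1 ht2)
  · rintro π hconv t ⟨ht1, ht2⟩
    have hsπ := sorted_of_convex a b f0 h hl hlen π hconv
    obtain ⟨w1, hw10, hw1l, hw1s, hw1v⟩ := faceArrange_weights a b f0 h hl hlen π t ht1 ht2
    obtain ⟨w2, hw20, hw2l, hw2s, hw2v⟩ := faceArrange_weights a b f0 h hl hlen π' t ht1 ht2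
    have le1 : faceArrange a f0 l h π' t ≤ faceArrange a f0 l h π t := by
      rw [hw1v]
      exact greedy_min a b f0 h hl hN hlen π' hsorted t ht1 ht2 w1 hw10 hw1l hw1s
    have le2 : faceArrange a f0 l h π t ≤ faceArrange a f0 l h π' t := by
      rw [hw2v]
      exact greedy_min a b f0 h hl hN hlen π hsπ t ht1 ht2 w2 hw20 hw2l hw2s
    linarith
end

section
/- Let f : [a,b] → ℝ be a piecewise linear convex function with faces {(lₖ,hₖ) : k ∈ ℕ}. Fix n ∈ ℕ and let g : [a,b] → ℝ be the piecewise linear convex function with g(a) = f(a) and faces {(lₖ,hₖ) : k ≤ n} ∪ {(l̃ₙ, 0)} where l̃ₙ = Σ_{m>n} lₘ. Then ‖f − g‖_∞ ≤ max{ Σ_{k>n} hₖ⁻ , Σ_{k>n} hₖ⁺ }. -/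
open Finset

lemma clamp_eq (t u v : ℝ) (hv : 0 ≤ v) :
    min (max (t - u) 0) v = min t (u + v) - min t u := by
  rcases le_total t u with h | h
  · rcases le_total t (u + v) with h2 | h2 <;>
      simp [min_def, max_def] <;> split_ifs <;> linarith
  · rcases le_total t (u + v) with h2 | h2 <;>
      simp [min_def, max_def] <;> split_ifs <;> linarith

lemma face_term_s3 (Hk Lk x : ℝ) (hL : 0 < Lk) :
    Hk * min (max x 0 / Lk) 1 = Hk / Lk * min (max x 0) Lk := by
  rcases le_total (max x 0) Lk with h | h
  · rw [min_eq_left h, min_eq_left (by rw [div_le_one hL]; exact h)]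
    field_simp
  · rw [min_eq_right h, min_eq_right (by rw [le_div_iff₀ hL]; simpa using h)]
    field_simp

lemma fin_sum_Iio {N : ℕ} (k : Fin N) (F : Fin N → ℝ) (FF : ℕ → ℝ)
    (hFF : ∀ (i : ℕ) (h : i < N), FF i = F ⟨i, h⟩) :
    ∑ j ∈ Iio k, F j = ∑ i ∈ range k.val, FF i := by
  refine Finset.sum_bij' (fun (j : Fin N) (_ : j ∈ Iio k) => (j : ℕ))
    (fun (i : ℕ) (hi : i ∈ range k.val) =>
      (⟨i, lt_of_lt_of_le (mem_range.mp hi) k.isLt.le⟩ : Fin N)) ?_ ?_ ?_ ?_ ?_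
  · intro j hj; simp at hj ⊢; exact hj
  · intro i hi; simp at hi ⊢; exact hi
  · intro j hj; simp
  · intro i hi; simp
  · intro j hj; exact (hFF j.val (j.isLt)).symm

lemma arrange_bounds (N : ℕ) (hN : 0 < N) (a f0 : ℝ) (L H : Fin N → ℝ)
    (hL : ∀ k, 0 < L k) (π : Equiv.Perm (Fin N))
    (hconv : ConvexOn ℝ (Set.Icc a (a + ∑ k, L k)) (faceArrange a f0 L H π))
    (t : ℝ) (hta : a ≤ t) (htb : t ≤ a + ∑ k, L k) :
    (∀ k : Fin N, f0 + (H k / L k) * (t - a)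
        - ∑ j : Fin N, L j * max (H k / L k - H j / L j) 0
        ≤ faceArrange a f0 L H π t)
    ∧ (∃ k : Fin N, faceArrange a f0 L H π t = f0 + (H k / L k) * (t - a)
        - ∑ j : Fin N, L j * max (H k / L k - H j / L j) 0) := by
  classical
  set LL : ℕ → ℝ := fun i => if h : i < N then L (π ⟨i, h⟩) else 1 with hLLdef
  set HH : ℕ → ℝ := fun i => if h : i < N then H (π ⟨i, h⟩) else 0 with hHHdef
  set sN : ℕ → ℝ := fun i => HH i / LL i with hsNdef
  set XX : ℕ → ℝ := fun i => a + ∑ j ∈ range i, LL j with hXXdef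
  have hLLpos : ∀ i, 0 < LL i := by
    intro i; simp only [hLLdef]; split_ifs with h
    · exact hL _
    · norm_num
  have hLLv : ∀ (k : Fin N), LL k.val = L (π k) := by
    intro k; simp only [hLLdef, dif_pos k.isLt]
  have hHHv : ∀ (k : Fin N), HH k.val = H (π k) := by
    intro k; simp only [hHHdef, dif_pos k.isLt]
  have hXsucc : ∀ i, XX (i + 1) = XX i + LL i := by
    intro i; simp only [hXXdef, sum_range_succ]; ring
  have hXmono : StrictMono XX := by
    apply strictMono_nat_of_lt_succ
    intro i; rw [hXsucc]; linarith [hLLpos i]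
  have hX0 : XX 0 = a := by simp [hXXdef]
  have hXN : XX N = a + ∑ k, L k := by
    simp only [hXXdef]
    congr 1
    rw [← Fin.sum_univ_eq_sum_range LL N]
    rw [show (∑ i : Fin N, LL i.val) = ∑ i : Fin N, L (π i) from
      Finset.sum_congr rfl (fun i _ => hLLv i)]
    exact Equiv.sum_comp π L
  -- rewrite of faceArrange
  have fa : ∀ u : ℝ, faceArrange a f0 L H π u
      = f0 + ∑ i ∈ range N, sN i * (min u (XX (i + 1)) - min u (XX i)) := by
    intro u
    unfold faceArrange
    congr 1
    have term : ∀ k : Fin N,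
        H (π k) * min (max (u - (a + ∑ j ∈ Iio k, L (π j))) 0 / L (π k)) 1
        = sN k.val * (min u (XX (k.val + 1)) - min u (XX k.val)) := by
      intro k
      rw [fin_sum_Iio k (fun j => L (π j)) LL (fun i h => by simp [hLLdef, dif_pos h])]
      rw [face_term_s3 _ _ _ (hL (π k))]
      rw [clamp_eq u (XX k.val) (L (π k)) (hL (π k)).le]
      rw [show XX k.val + L (π k) = XX (k.val + 1) by rw [hXsucc, hLLv]]
      simp only [hsNdef, hHHv, hLLv]
    rw [Finset.sum_congr rfl (fun k _ => term k)]
    exact Fin.sum_univ_eq_sum_range (fun i => sN i * (min u (XX (i+1)) - min u (XX i))) N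
  -- values at breakpoints
  have hXval : ∀ i, i ≤ N → faceArrange a f0 L H π (XX i) = f0 + ∑ j ∈ range i, HH j := by
    intro i hi
    rw [fa]
    congr 1
    have term : ∀ j ∈ range N,
        sN j * (min (XX i) (XX (j + 1)) - min (XX i) (XX j))
        = if j < i then HH j else 0 := by
      intro j hj
      rcases lt_or_ge j i with hji | hji
      · rw [if_pos hji]
        rw [min_eq_right (hXmono.monotone (by omega : j + 1 ≤ i)),
            min_eq_right (hXmono.monotone (by omega : j ≤ i))]
        rw [hXsucc]
        simp only [hsNdef]
        rw [show XX j + LL j - XX j = LL j by ring, div_mul_cancel₀ _ (hLLpos j).ne']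
      · rw [if_neg (by omega)]
        rw [min_eq_left (hXmono.monotone (by omega : i ≤ j + 1)),
            min_eq_left (hXmono.monotone hji)]
        ring
    rw [Finset.sum_congr rfl term, ← Finset.sum_filter]
    congr 1
    ext x
    simp only [mem_filter, mem_range]
    omega
  -- sorted slopes
  have hmem : ∀ i, i ≤ N → XX i ∈ Set.Icc a (a + ∑ k, L k) := by
    intro i hi
    constructor
    · rw [← hX0]; exact hXmono.monotone (Nat.zero_le i)
    · rw [← hXN]; exact hXmono.monotone hi
  have hadj : ∀ i, i + 2 ≤ N → sN i ≤ sN (i + 1) := by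
    intro i hi
    have h1 : XX i < XX (i + 1) := hXmono (by omega)
    have h2 : XX (i + 1) < XX (i + 2) := hXmono (by omega)
    have := hconv.slope_mono_adjacent (hmem i (by omega)) (hmem (i + 2) (by omega)) h1 h2
    rw [hXval i (by omega), hXval (i + 1) (by omega), hXval (i + 2) (by omega)] at this
    rw [sum_range_succ (n := i + 1), sum_range_succ (n := i)] at this
    have d1 : XX (i + 1) - XX i = LL i := by rw [hXsucc]; ring
    have d2 : XX (i + 2) - XX (i + 1) = LL (i + 1) := by rw [hXsucc (i+1)]; ring
    rw [d1, d2] at this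
    have e1 : (f0 + (∑ j ∈ range i, HH j + HH i) - (f0 + ∑ j ∈ range i, HH j)) = HH i := by ring
    have e2 : (f0 + (∑ j ∈ range i, HH j + HH i + HH (i + 1)) - (f0 + (∑ j ∈ range i, HH j + HH i))) = HH (i + 1) := by ring
    rw [e1, e2] at this
    exact this
  have hsort : ∀ i j, i ≤ j → j < N → sN i ≤ sN j := by
    intro i j hij hjN
    induction j, hij using Nat.le_induction with
    | base => exact le_refl _
    | succ j hij ih =>
      exact le_trans (ih (by omega)) (hadj j (by omega))
  -- clamp values
  set c : ℕ → ℝ := fun i => min t (XX (i + 1)) - min t (XX i) with hcdef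
  have hc0 : ∀ i, 0 ≤ c i := by
    intro i
    simp only [hcdef]
    have := min_le_min (le_refl t) (hXmono.monotone (by omega : i ≤ i + 1))
    linarith
  have hcL : ∀ i, c i ≤ LL i := by
    intro i
    have h1 : min t (XX (i + 1)) ≤ XX i + LL i := by
      rw [← hXsucc]; exact min_le_right _ _
    have h2 : min t (XX (i + 1)) ≤ t := min_le_left _ _
    simp only [hcdef]
    rcases le_total t (XX i) with h | h
    · rw [min_eq_left h]; linarith [hLLpos i]
    · rw [min_eq_right h]; linarith
  have hcsum : ∑ i ∈ range N, c i = t - a := by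
    simp only [hcdef]
    rw [Finset.sum_range_sub (fun i => min t (XX i))]
    rw [hX0, min_eq_right hta, min_eq_left (le_of_le_of_eq htb hXN.symm)]
  have hQ : ∀ s : ℝ, (∑ j : Fin N, L j * max (s - H j / L j) 0)
      = ∑ i ∈ range N, LL i * max (s - sN i) 0 := by
    intro s
    rw [← Equiv.sum_comp π (fun j => L j * max (s - H j / L j) 0)]
    rw [← Fin.sum_univ_eq_sum_range (fun i => LL i * max (s - sN i) 0) N]
    refine Finset.sum_congr rfl (fun k _ => ?_)
    simp only [hsNdef, hHHv, hLLv]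
  have hid : ∀ s : ℝ, faceArrange a f0 L H π t
      - (f0 + s * (t - a) - ∑ i ∈ range N, LL i * max (s - sN i) 0)
      = ∑ i ∈ range N, ((sN i - s) * c i + LL i * max (s - sN i) 0) := by
    intro s
    have e : ∀ i ∈ range N, (sN i - s) * c i + LL i * max (s - sN i) 0
        = sN i * c i - s * c i + LL i * max (s - sN i) 0 := by
      intro i _; ring
    rw [Finset.sum_congr rfl e, Finset.sum_add_distrib, Finset.sum_sub_distrib,
      ← Finset.mul_sum, hcsum, fa t]
    ring
  constructor
  · intro k
    rw [hQ]
    have hterm : ∀ i ∈ range N,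
        0 ≤ (sN i - H k / L k) * c i + LL i * max (H k / L k - sN i) 0 := by
      intro i _
      rcases le_total (sN i) (H k / L k) with hcmp | hcmp
      · rw [max_eq_left (by linarith)]
        have e : (sN i - H k / L k) * c i + LL i * (H k / L k - sN i)
            = (H k / L k - sN i) * (LL i - c i) + (H k / L k - sN i) * c i
              - (H k / L k - sN i) * c i + (sN i - H k / L k) * c i
              + (H k / L k - sN i) * c i := by ring
        have key : 0 ≤ (H k / L k - sN i) * (LL i - c i) :=
          mul_nonneg (by linarith) (by linarith [hcL i])
        nlinarith [key, hc0 i, hcL i]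
      · rw [max_eq_right (by linarith)]
        have key : 0 ≤ (sN i - H k / L k) * c i :=
          mul_nonneg (by linarith) (hc0 i)
        linarith [key]
    have hnn := Finset.sum_nonneg hterm
    rw [← hid (H k / L k)] at hnn
    linarith
  · set P : ℕ → Prop := fun i => XX i ≤ t with hPdef
    set i0 := Nat.findGreatest P (N - 1) with hi0def
    have hi0N : i0 < N := lt_of_le_of_lt (Nat.findGreatest_le (N - 1)) (by omega)
    have hP0 : P 0 := by simp only [hPdef]; rw [hX0]; exact hta
    have hx0 : XX i0 ≤ t := Nat.findGreatest_spec (Nat.zero_le _) hP0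
    have hgt : ∀ i, i0 < i → i < N → t < XX i := by
      intro i h1 h2
      by_contra hcon
      push_neg at hcon
      exact Nat.findGreatest_is_greatest h1 (by omega) hcon
    refine ⟨π ⟨i0, hi0N⟩, ?_⟩
    have hsk : H (π ⟨i0, hi0N⟩) / L (π ⟨i0, hi0N⟩) = sN i0 := by
      simp only [hsNdef]
      rw [hHHv ⟨i0, hi0N⟩, hLLv ⟨i0, hi0N⟩]
    rw [hsk, hQ]
    have hterm : ∀ i ∈ range N,
        (sN i - sN i0) * c i + LL i * max (sN i0 - sN i) 0 = 0 := by
      intro i hi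
      rw [mem_range] at hi
      rcases lt_trichotomy i i0 with hlt | heq | hgt'
      · have hcle : c i = LL i := by
          simp only [hcdef]
          rw [min_eq_right (le_trans (hXmono.monotone (by omega : i + 1 ≤ i0)) hx0),
              min_eq_right (le_trans (hXmono.monotone (by omega : i ≤ i0)) hx0), hXsucc]
          ring
        rw [max_eq_left (sub_nonneg.mpr (hsort i i0 (by omega) hi0N)), hcle]
        ring
      · subst heq
        rw [sub_self, zero_mul]
        simp
      · have hceq : c i = 0 := by
          simp only [hcdef]
          have ht1 : t ≤ XX i := (hgt i hgt' hi).le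
          have ht2 : t ≤ XX (i + 1) := ht1.trans (hXmono (lt_add_one i)).le
          rw [min_eq_left ht1, min_eq_left ht2]
          ring
        rw [hceq, mul_zero, zero_add,
          max_eq_right (sub_nonpos.mpr (hsort i0 i (by omega) hi)), mul_zero]
    have hzero : ∑ i ∈ range N,
        ((sN i - sN i0) * c i + LL i * max (sN i0 - sN i) 0) = 0 :=
      Finset.sum_eq_zero hterm
    have hfin := hid (sN i0)
    rw [hzero] at hfin
    linarith

lemma term_nonneg {σ s cc ll : ℝ} (h0 : 0 ≤ cc) (h1 : cc ≤ ll) :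
    0 ≤ (σ - s) * cc + ll * max (s - σ) 0 := by
  rcases le_total σ s with hc | hc
  · rw [max_eq_left (by linarith : (0:ℝ) ≤ s - σ)]
    have e : (σ - s) * cc + ll * (s - σ) = (s - σ) * (ll - cc) := by ring
    rw [e]; exact mul_nonneg (by linarith) (by linarith)
  · rw [max_eq_right (by linarith : s - σ ≤ (0:ℝ)), mul_zero, add_zero]
    exact mul_nonneg (by linarith) h0

lemma tail_lb_nonpos {hh ll cc s : ℝ} (hl : 0 < ll) (h0 : 0 ≤ cc) (h1 : cc ≤ ll)
    (hs : s ≤ 0) : -max (-hh) 0 ≤ ll * max s 0 + (hh / ll - s) * cc := by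
  rw [max_eq_right hs, mul_zero, zero_add]
  rcases le_total 0 hh with hh0 | hh0
  · rw [max_eq_right (by linarith : -hh ≤ (0:ℝ)), neg_zero]
    have h2 : 0 ≤ hh / ll := div_nonneg hh0 hl.le
    exact mul_nonneg (by linarith) h0
  · rw [max_eq_left (by linarith : (0:ℝ) ≤ -hh), neg_neg]
    have key : hh / ll * ll = hh := div_mul_cancel₀ _ hl.ne'
    have h2 : hh / ll ≤ 0 := div_nonpos_of_nonpos_of_nonneg hh0 hl.le
    have k1 : hh / ll * cc ≤ (hh / ll - s) * cc :=
      mul_le_mul_of_nonneg_right (by linarith) h0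
    have k2 : hh / ll * ll ≤ hh / ll * cc := mul_le_mul_of_nonpos_left h1 h2
    linarith
lemma tail_term_lb {hh ll cc s : ℝ} (hl : 0 < ll) (h0 : 0 ≤ cc) (h1 : cc ≤ ll)
    (hcase : s ≤ 0 ∨ s ≤ hh / ll) :
    -max (-hh) 0 ≤ ll * max s 0 + (hh / ll - s) * cc := by
  rcases hcase with hs | hs
  · exact tail_lb_nonpos hl h0 h1 hs
  · rcases le_total s 0 with hs0 | hs0
    · exact tail_lb_nonpos hl h0 h1 hs0
    · have hh0 : 0 ≤ hh := by
        have k := mul_le_mul_of_nonneg_right hs hl.le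
        rw [div_mul_cancel₀ _ hl.ne'] at k
        nlinarith
      rw [max_eq_right (by linarith : -hh ≤ (0:ℝ)), neg_zero, max_eq_left hs0]
      have k1 : cc * s ≤ ll * s := mul_le_mul_of_nonneg_right h1 hs0
      have k2 : 0 ≤ hh / ll * cc := mul_nonneg (div_nonneg hh0 hl.le) h0
      have e : (hh / ll - s) * cc = hh / ll * cc - cc * s := by ring
      rw [e]; linarith

lemma sc_le_max {hh ll cc : ℝ} (hl : 0 < ll) (h0 : 0 ≤ cc) (h1 : cc ≤ ll) :
    hh / ll * cc ≤ max hh 0 := by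
  rcases le_total 0 hh with hh0 | hh0
  · rw [max_eq_left hh0]
    calc hh / ll * cc ≤ hh / ll * ll :=
          mul_le_mul_of_nonneg_left h1 (div_nonneg hh0 hl.le)
      _ = hh := div_mul_cancel₀ _ hl.ne'
  · rw [max_eq_right hh0]
    have h2 : hh / ll ≤ 0 := div_nonpos_of_nonpos_of_nonneg hh0 hl.le
    exact mul_nonpos_iff.mpr (Or.inr ⟨h2, h0⟩)

/-- **Truncation error for convex minorants.**  Let `f` be the piecewise linear convex
function on `[a,b]` with faces `(lₖ, hₖ)`, `k ∈ ℕ`, listed in nondecreasing order of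
slope, with `Σ lₖ = b - a` and `Σ |hₖ| < ∞`.  Let `g` be the piecewise linear convex
function with `g(a) = f(a)` and faces `{(lₖ,hₖ) : k < n} ∪ {(l̃ₙ, 0)}`, where
`l̃ₙ = Σ_{k ≥ n} lₖ`.  Then `‖f - g‖_∞ ≤ max { Σ_{k ≥ n} hₖ⁻ , Σ_{k ≥ n} hₖ⁺ }`. -/
theorem truncation_error_convex
    (a b f0 : ℝ) (hab : a < b) (l h : ℕ → ℝ) (n : ℕ)
    (hl : ∀ k, 0 < l k)
    (hsl : Summable l) (hlen : ∑' k, l k = b - a)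
    (hsh : Summable fun k => |h k|)
    (hsorted : ∀ j k : ℕ, j ≤ k → h j / l j ≤ h k / l k)
    (f : ℝ → ℝ)
    (hf : ∀ t, f t = f0 + ∑' k : ℕ,
      h k * min (max (t - (a + ∑ j ∈ Finset.range k, l j)) 0 / l k) 1)
    (g : ℝ → ℝ)
    (hg : ∃ π, g = faceArrange a f0
      (Fin.snoc (fun k : Fin n => l k) (∑' k, l (n + k)))
      (Fin.snoc (fun k : Fin n => h k) 0) π)
    (hgconv : ConvexOn ℝ (Set.Icc a b) g) :
    ∀ t ∈ Set.Icc a b,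
      |f t - g t| ≤ max (∑' k, max (-h (n + k)) 0) (∑' k, max (h (n + k)) 0) := by
  classical
  obtain ⟨π, hgdef⟩ := hg
  intro t ht
  obtain ⟨hta, htb⟩ := ht
  have hSl' : Summable fun k => l (n + k) :=
    ((summable_nat_add_iff n).mpr hsl).congr fun k => by rw [Nat.add_comm]
  have hsplit : ∀ F : ℕ → ℝ, Summable F →
      (∑' j, F j) = (∑ j ∈ range n, F j) + ∑' k, F (n + k) := by
    intro F hF
    rw [← Summable.sum_add_tsum_nat_add n hF]
    congr 1
    exact tsum_congr fun k => by rw [Nat.add_comm]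
  set x : ℕ → ℝ := fun j => a + ∑ i ∈ range j, l i with hxdef
  have hxsucc : ∀ j, x (j + 1) = x j + l j := fun j => by
    simp only [hxdef, sum_range_succ]; ring
  have hxmono : StrictMono x := strictMono_nat_of_lt_succ fun j => by
    rw [hxsucc]; linarith [hl j]
  have hx0 : x 0 = a := by simp [hxdef]
  set Lt : ℝ := ∑' k, l (n + k) with hLtdef
  have hLtpos : 0 < Lt := Summable.tsum_pos hSl' (fun k => (hl _).le) 0 (hl _)
  have hxnLt : x n + Lt = b := by
    have h1 := hsplit l hsl
    rw [hlen] at h1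
    have h2 : x n = a + ∑ i ∈ range n, l i := rfl
    rw [← hLtdef] at h1
    linarith
  have hxb : ∀ j, x j ≤ b := by
    intro j
    have h1 : ∑ i ∈ range j, l i ≤ ∑' i, l i :=
      Summable.sum_le_tsum (range j) (fun i _ => (hl i).le) hsl
    rw [hlen] at h1
    have h2 : x j = a + ∑ i ∈ range j, l i := rfl
    linarith
  set L : Fin (n + 1) → ℝ := Fin.snoc (fun k : Fin n => l k) Lt with hLdef
  set H : Fin (n + 1) → ℝ := Fin.snoc (fun k : Fin n => h k) 0 with hHdef
  have hLcast : ∀ k : Fin n, L k.castSucc = l k := fun k => by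
    simp only [hLdef, Fin.snoc_castSucc]
  have hHcast : ∀ k : Fin n, H k.castSucc = h k := fun k => by
    simp only [hHdef, Fin.snoc_castSucc]
  have hLlast : L (Fin.last n) = Lt := by simp only [hLdef, Fin.snoc_last]
  have hHlast : H (Fin.last n) = 0 := by simp only [hHdef, Fin.snoc_last]
  have hLpos : ∀ k, 0 < L k := by
    intro k
    induction k using Fin.lastCases with
    | last => rw [hLlast]; exact hLtpos
    | cast i => rw [hLcast]; exact hl i
  have hLsum : a + ∑ k, L k = b := by
    rw [Fin.sum_univ_castSucc]
    have e1 : ∑ k : Fin n, L k.castSucc = ∑ i ∈ range n, l i := by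
      rw [Finset.sum_congr rfl fun k _ => hLcast k]
      exact Fin.sum_univ_eq_sum_range (fun i => l i) n
    rw [e1, hLlast]
    have h2 : x n = a + ∑ i ∈ range n, l i := rfl
    linarith [hxnLt]
  have hconv : ConvexOn ℝ (Set.Icc a (a + ∑ k, L k)) (faceArrange a f0 L H π) := by
    rw [hLsum, ← hgdef]; exact hgconv
  obtain ⟨hLB, k0, hk0⟩ :=
    arrange_bounds (n + 1) n.succ_pos a f0 L H hLpos π hconv t hta
      (by rw [hLsum]; exact htb)
  set c : ℕ → ℝ := fun j => min t (x (j + 1)) - min t (x j) with hcdef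
  have hc0 : ∀ j, 0 ≤ c j := fun j => by
    have := min_le_min (le_refl t) (hxmono.monotone (Nat.le_succ j))
    simp only [hcdef]; linarith
  have hcl : ∀ j, c j ≤ l j := fun j => by
    have h1 : min t (x (j + 1)) ≤ x j + l j := by rw [← hxsucc]; exact min_le_right _ _
    have h2 : min t (x (j + 1)) ≤ t := min_le_left _ _
    simp only [hcdef]
    rcases le_total t (x j) with hcase | hcase
    · rw [min_eq_left hcase]; linarith [hl j]
    · rw [min_eq_right hcase]; linarith
  have hSc : Summable c := Summable.of_nonneg_of_le hc0 hcl hsl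
  have hctail : ∀ j, t ≤ x j → c j = 0 := fun j hj => by
    simp only [hcdef]
    rw [min_eq_left hj, min_eq_left (hj.trans (hxmono (Nat.lt_succ_self j)).le)]
    ring
  have hcfull : ∀ j, x (j + 1) ≤ t → c j = l j := fun j hj => by
    simp only [hcdef]
    rw [min_eq_right hj, min_eq_right ((hxmono (Nat.lt_succ_self j)).le.trans hj), hxsucc]
    ring
  have hcsum : ∑' j, c j = t - a := by
    have h1 : Filter.Tendsto (fun K => ∑ j ∈ range K, c j) Filter.atTop (nhds (t - a)) := by
      have he : ∀ K, ∑ j ∈ range K, c j = min t (x K) - a := by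
        intro K
        simp only [hcdef]
        rw [Finset.sum_range_sub (fun i => min t (x i)), hx0, min_eq_right hta]
      rw [show (fun K => ∑ j ∈ range K, c j) = fun K => min t (x K) - a from funext he]
      have hxt : Filter.Tendsto x Filter.atTop (nhds b) := by
        have h2 := hsl.hasSum.tendsto_sum_nat
        rw [hlen] at h2
        have h3 := h2.const_add a
        have h4 : b = a + (b - a) := by ring
        rw [← h4] at h3
        exact h3
      have h3 : Filter.Tendsto (fun K => min t (x K)) Filter.atTop (nhds (min t b)) :=
        Filter.Tendsto.min tendsto_const_nhds hxt
      rw [min_eq_left htb] at h3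
      exact h3.sub_const a
    exact tendsto_nhds_unique hSc.hasSum.tendsto_sum_nat h1
  have habs : ∀ j, |h j / l j * c j| ≤ |h j| := by
    intro j
    rw [abs_mul, abs_div, abs_of_pos (hl j), abs_of_nonneg (hc0 j)]
    rw [div_mul_eq_mul_div, div_le_iff₀ (hl j)]
    exact mul_le_mul_of_nonneg_left (hcl j) (abs_nonneg _)
  have hSphi : Summable fun j => h j / l j * c j :=
    Summable.of_abs (Summable.of_nonneg_of_le (fun j => abs_nonneg _) habs hsh)
  have hft : f t = f0 + ∑' j, h j / l j * c j := by
    rw [hf t]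
    congr 1
    apply tsum_congr; intro j
    rw [show a + ∑ i ∈ range j, l i = x j from rfl]
    rw [face_term_s3 _ _ _ (hl j), clamp_eq t (x j) (l j) (hl j).le, ← hxsucc]
  have hQS : ∀ s : ℝ, (∑ j : Fin (n + 1), L j * max (s - H j / L j) 0)
      = (∑ j ∈ range n, l j * max (s - h j / l j) 0) + Lt * max s 0 := by
    intro s
    rw [Fin.sum_univ_castSucc]
    congr 1
    · rw [← Fin.sum_univ_eq_sum_range (fun i => l i * max (s - h i / l i) 0) n]
      refine Finset.sum_congr rfl fun k _ => ?_
      rw [hLcast, hHcast]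
    · rw [hLlast, hHlast, zero_div, sub_zero]
  have hsubS : ∀ s : ℝ, Summable fun j => (h j / l j - s) * c j := by
    intro s
    have e : (fun j => (h j / l j - s) * c j) = fun j => h j / l j * c j - s * c j :=
      funext fun j => by ring
    rw [e]
    exact hSphi.sub (hSc.mul_left s)
  have hD : ∀ s : ℝ,
      f t - (f0 + s * (t - a) - ∑ j : Fin (n + 1), L j * max (s - H j / L j) 0)
      = (∑ j ∈ range n, ((h j / l j - s) * c j + l j * max (s - h j / l j) 0))
        + (Lt * max s 0 + ∑' k, (h (n + k) / l (n + k) - s) * c (n + k)) := by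
    intro s
    rw [hft, hQS s]
    have e2 : s * (t - a) = ∑' j, s * c j := by rw [tsum_mul_left, hcsum]
    have e1 : (∑' j, h j / l j * c j) - s * (t - a) = ∑' j, (h j / l j - s) * c j := by
      rw [e2, ← Summable.tsum_sub hSphi (hSc.mul_left s)]
      exact tsum_congr fun j => by ring
    have e4 := (hsplit _ (hsubS s)).symm
    rw [Finset.sum_add_distrib]
    linarith [e1, e4]
  set Mneg : ℝ := ∑' k, max (-h (n + k)) 0 with hMnegdef
  set Mpos : ℝ := ∑' k, max (h (n + k)) 0 with hMposdef
  have hshtail : Summable fun k => |h (n + k)| :=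
    ((summable_nat_add_iff n).mpr hsh).congr fun k => by rw [Nat.add_comm]
  have hSneg : Summable fun k => max (-h (n + k)) 0 :=
    Summable.of_nonneg_of_le (fun k => le_max_right _ _)
      (fun k => max_le (neg_le_abs _) (abs_nonneg _)) hshtail
  have hSpos : Summable fun k => max (h (n + k)) 0 :=
    Summable.of_nonneg_of_le (fun k => le_max_right _ _)
      (fun k => max_le (le_abs_self _) (abs_nonneg _)) hshtail
  have hMneg0 : 0 ≤ Mneg := tsum_nonneg fun k => le_max_right _ _
  have hMpos0 : 0 ≤ Mpos := tsum_nonneg fun k => le_max_right _ _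
  have hSctail : Summable fun k => c (n + k) :=
    ((summable_nat_add_iff n).mpr hSc).congr fun k => by rw [Nat.add_comm]
  have hSphitail : Summable fun k => h (n + k) / l (n + k) * c (n + k) :=
    ((summable_nat_add_iff n).mpr hSphi).congr fun k => by rw [Nat.add_comm]
  have hShtail : Summable fun k => h (n + k) :=
    ((summable_nat_add_iff n).mpr hsh.of_abs).congr fun k => by rw [Nat.add_comm]
  have hsubStail : ∀ s : ℝ, Summable fun k => (h (n + k) / l (n + k) - s) * c (n + k) :=
    fun s => ((summable_nat_add_iff n).mpr (hsubS s)).congr fun k => by rw [Nat.add_comm]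
  -- lower bound
  have hlow : ∀ k : Fin (n + 1), -Mneg ≤ f t
      - (f0 + (H k / L k) * (t - a)
        - ∑ j : Fin (n + 1), L j * max (H k / L k - H j / L j) 0) := by
    intro k
    rw [hD (H k / L k)]
    have hcase : H k / L k ≤ 0 ∨ ∀ k' : ℕ, H k / L k ≤ h (n + k') / l (n + k') := by
      induction k using Fin.lastCases with
      | last => left; rw [hHlast, zero_div]
      | cast i => right; intro k'; rw [hHcast, hLcast]; exact hsorted i (n + k') (by omega)
    have part1 : 0 ≤ ∑ j ∈ range n,
        ((h j / l j - H k / L k) * c j + l j * max (H k / L k - h j / l j) 0) :=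
      Finset.sum_nonneg fun j _ => term_nonneg (hc0 j) (hcl j)
    have part2 : -Mneg ≤ Lt * max (H k / L k) 0
        + ∑' k', (h (n + k') / l (n + k') - H k / L k) * c (n + k') := by
      have e5 : Lt * max (H k / L k) 0 = ∑' k', l (n + k') * max (H k / L k) 0 := by
        rw [tsum_mul_right]
      rw [e5, ← Summable.tsum_add (hSl'.mul_right _) (hsubStail _), hMnegdef, ← tsum_neg]
      apply Summable.tsum_le_tsum _ hSneg.neg ((hSl'.mul_right _).add (hsubStail _))
      intro k'
      rcases hcase with hc | hc
      · exact tail_term_lb (hl (n + k')) (hc0 _) (hcl _) (Or.inl hc)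
      · exact tail_term_lb (hl (n + k')) (hc0 _) (hcl _) (Or.inr (hc k'))
    linarith [part1, part2]
  -- upper bound: find a good supporting slope S
  have hup : ∃ S : ℝ, (∃ k1 : Fin (n + 1), H k1 / L k1 = S) ∧
      (∑ j ∈ range n, ((h j / l j - S) * c j + l j * max (S - h j / l j) 0))
        + (Lt * max S 0 + ∑' k, (h (n + k) / l (n + k) - S) * c (n + k)) ≤ Mpos := by
    rcases lt_or_ge t (x n) with hA | hB
    · -- Case A : t < x n
      have hn1 : 1 ≤ n := by
        rcases Nat.eq_zero_or_pos n with h0 | h0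
        · exfalso; rw [h0, hx0] at hA; linarith
        · exact h0
      set j0 := Nat.findGreatest (fun j => x j ≤ t) (n - 1) with hj0def
      have hj0n : j0 ≤ n - 1 := Nat.findGreatest_le _
      have hj0lt : j0 < n := by omega
      have hxj0 : x j0 ≤ t := by
        rw [hj0def]
        exact Nat.findGreatest_spec (P := fun j => x j ≤ t) (Nat.zero_le _)
          (show x 0 ≤ t by rw [hx0]; exact hta)
      have htj1 : t ≤ x (j0 + 1) := by
        rcases Nat.lt_or_ge j0 (n - 1) with hc | hc
        · by_contra hcon
          push_neg at hcon
          exact Nat.findGreatest_is_greatest (Nat.lt_succ_self j0) (by omega) hcon.le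
        · have he : j0 + 1 = n := by omega
          rw [he]; exact hA.le
      refine ⟨h j0 / l j0, ⟨(⟨j0, hj0lt⟩ : Fin n).castSucc, by rw [hLcast, hHcast]⟩, ?_⟩
      have hfin : ∑ j ∈ range n,
          ((h j / l j - h j0 / l j0) * c j + l j * max (h j0 / l j0 - h j / l j) 0) = 0 := by
        apply Finset.sum_eq_zero
        intro j hj
        rw [mem_range] at hj
        rcases lt_trichotomy j j0 with hlt | heq | hgt
        · rw [hcfull j ((hxmono.monotone (by omega)).trans hxj0),
            max_eq_left (sub_nonneg.mpr (hsorted j j0 (by omega)))]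
          ring
        · subst heq; rw [sub_self, zero_mul]; simp
        · rw [hctail j (htj1.trans (hxmono.monotone (by omega))),
            max_eq_right (sub_nonpos.mpr (hsorted j0 j (by omega))), mul_zero, mul_zero]
          ring
      have htail0 : ∑' k', (h (n + k') / l (n + k') - h j0 / l j0) * c (n + k') = 0 := by
        rw [show (fun k' => (h (n + k') / l (n + k') - h j0 / l j0) * c (n + k'))
            = fun _ => (0 : ℝ) from funext fun k' => by
          rw [hctail (n + k') (htj1.trans (hxmono.monotone (by omega))), mul_zero]]
        exact tsum_zero
      rw [hfin, htail0, zero_add, add_zero]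
      rcases le_total (h j0 / l j0) 0 with hS0 | hS0
      · rw [max_eq_right hS0, mul_zero]; exact hMpos0
      · rw [max_eq_left hS0]
        have e5 : Lt * (h j0 / l j0) = ∑' k', l (n + k') * (h j0 / l j0) := by
          rw [tsum_mul_right, ← hLtdef]
        rw [e5, hMposdef]
        apply Summable.tsum_le_tsum _ (hSl'.mul_right _) hSpos
        intro k'
        calc l (n + k') * (h j0 / l j0)
            ≤ l (n + k') * (h (n + k') / l (n + k')) :=
              mul_le_mul_of_nonneg_left (hsorted j0 (n + k') (by omega)) (hl _).le
          _ = h (n + k') / l (n + k') * l (n + k') := mul_comm _ _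
          _ ≤ max (h (n + k')) 0 := sc_le_max (hl _) (hl _).le le_rfl
    · -- Case B : x n ≤ t
      have hcfulln : ∀ j, j < n → c j = l j := fun j hj =>
        hcfull j ((hxmono.monotone (by omega)).trans hB)
      have hCn : ∑ j ∈ range n, c j = x n - a := by
        rw [Finset.sum_congr rfl fun j hj => hcfulln j (mem_range.mp hj)]
        have e1 : x n = a + ∑ i ∈ range n, l i := rfl
        linarith
      have hCtail : ∑' k', c (n + k') = t - x n := by
        have h1 := hsplit c hSc
        rw [hcsum, hCn] at h1
        linarith
      have hPex : ∃ j, n ≤ j ∨ 0 ≤ h j / l j := ⟨n, Or.inl le_rfl⟩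
      set m := Nat.find hPex with hmdef
      have hmn : m ≤ n := Nat.find_le (Or.inl le_rfl)
      have hmlt : ∀ j, j < m → j < n ∧ h j / l j < 0 := by
        intro j hj
        have h1 := Nat.find_min hPex hj
        push_neg at h1
        exact ⟨h1.1, h1.2⟩
      have hm0 : m < n → 0 ≤ h m / l m := by
        intro h'
        rcases Nat.find_spec hPex with h1 | h1
        · omega
        · exact h1
      rcases le_or_gt t (x m + Lt) with hB2 | hB2'
      · -- B2 : t ≤ x m + Lt, choose S = 0
        refine ⟨0, ⟨Fin.last n, by rw [hHlast]; exact zero_div _⟩, ?_⟩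
        have hfin : ∑ j ∈ range n, ((h j / l j - 0) * c j + l j * max (0 - h j / l j) 0)
            = ∑ j ∈ Ico m n, h j := by
          rw [range_eq_Ico, ← Finset.sum_Ico_consecutive _ (Nat.zero_le m) hmn]
          have hz : ∑ j ∈ Ico 0 m,
              ((h j / l j - 0) * c j + l j * max (0 - h j / l j) 0) = 0 := by
            apply Finset.sum_eq_zero
            intro j hj
            rw [mem_Ico] at hj
            obtain ⟨hjn, hjneg⟩ := hmlt j hj.2
            rw [hcfulln j hjn, max_eq_left (by linarith : (0:ℝ) ≤ 0 - h j / l j)]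
            ring
          rw [hz, zero_add]
          apply Finset.sum_congr rfl
          intro j hj
          rw [mem_Ico] at hj
          have hσ : 0 ≤ h j / l j := (hm0 (lt_of_le_of_lt hj.1 hj.2)).trans (hsorted m j hj.1)
          rw [hcfulln j hj.2, max_eq_right (by linarith : 0 - h j / l j ≤ 0), mul_zero,
            add_zero, sub_zero, div_mul_cancel₀ _ (hl j).ne']
        have e6 : ∑' k', (h (n + k') / l (n + k') - 0) * c (n + k')
            = ∑' k', h (n + k') / l (n + k') * c (n + k') :=
          tsum_congr fun k' => by rw [sub_zero]
        rw [hfin, max_self, mul_zero, zero_add, e6]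
        rcases eq_or_lt_of_le hmn with heq | hmltn
        · rw [heq, Finset.Ico_self, Finset.sum_empty, zero_add, hMposdef]
          exact Summable.tsum_le_tsum (fun k' => sc_le_max (hl _) (hc0 _) (hcl _)) hSphitail hSpos
        · have hsbar0 : 0 ≤ h (n - 1) / l (n - 1) :=
            (hm0 hmltn).trans (hsorted m (n - 1) (by omega))
          have htailh0 : ∀ k', 0 ≤ h (n + k') := by
            intro k'
            have h1 : 0 ≤ h (n + k') / l (n + k') :=
              hsbar0.trans (hsorted (n - 1) (n + k') (by omega))
            have h2 := mul_nonneg h1 (hl (n + k')).le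
            rwa [div_mul_cancel₀ _ (hl (n + k')).ne'] at h2
          have hMpos_eq : Mpos = ∑' k', h (n + k') := by
            rw [hMposdef]; exact tsum_congr fun k' => max_eq_left (htailh0 k')
          have hIco_l : ∑ j ∈ Ico m n, l j = x n - x m := by
            rw [Finset.sum_Ico_eq_sub _ hmn]
            have e1 : x n = a + ∑ i ∈ range n, l i := rfl
            have e2 : x m = a + ∑ i ∈ range m, l i := rfl
            linarith
          have key1 : ∑ j ∈ Ico m n, h j ≤ h (n - 1) / l (n - 1) * (x n - x m) := by
            rw [← hIco_l, Finset.mul_sum]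
            apply Finset.sum_le_sum
            intro j hj
            rw [mem_Ico] at hj
            have e1 : h j = h j / l j * l j := (div_mul_cancel₀ _ (hl j).ne').symm
            rw [e1]
            exact mul_le_mul_of_nonneg_right (hsorted j (n - 1) (by omega)) (hl j).le
          have key2 : h (n - 1) / l (n - 1) * (Lt - (t - x n))
              ≤ (∑' k', h (n + k')) - ∑' k', h (n + k') / l (n + k') * c (n + k') := by
            rw [← Summable.tsum_sub hShtail hSphitail]
            have e7 : h (n - 1) / l (n - 1) * (Lt - (t - x n))
                = ∑' k', h (n - 1) / l (n - 1) * (l (n + k') - c (n + k')) := by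
              rw [tsum_mul_left, Summable.tsum_sub hSl' hSctail, hCtail, ← hLtdef]
            rw [e7]
            apply Summable.tsum_le_tsum _ ((hSl'.sub hSctail).mul_left _) (hShtail.sub hSphitail)
            intro k'
            have hdm : h (n + k') / l (n + k') * l (n + k') = h (n + k') :=
              div_mul_cancel₀ _ (hl _).ne'
            calc h (n - 1) / l (n - 1) * (l (n + k') - c (n + k'))
                ≤ h (n + k') / l (n + k') * (l (n + k') - c (n + k')) :=
                  mul_le_mul_of_nonneg_right (hsorted (n - 1) (n + k') (by omega))
                    (by linarith [hcl (n + k')])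
              _ = h (n + k') - h (n + k') / l (n + k') * c (n + k') := by
                  rw [mul_sub, hdm]
          have key3 : h (n - 1) / l (n - 1) * (x n - x m)
              ≤ h (n - 1) / l (n - 1) * (Lt - (t - x n)) :=
            mul_le_mul_of_nonneg_left (by linarith) hsbar0
          rw [hMpos_eq]
          linarith [key1, key2, key3]
      · -- B1 : x m + Lt < t, choose S = h j' / l j'
        have hmltn : m < n := by
          by_contra hcon
          push_neg at hcon
          have he : m = n := le_antisymm hmn hcon
          rw [he] at hB2'
          linarith [htb, hxnLt]
        set j' := Nat.findGreatest (fun j => x j ≤ t - Lt) (n - 1) with hj'def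
        have hbase : x m ≤ t - Lt := by linarith
        have hj'm : m ≤ j' := by
          rw [hj'def]
          exact Nat.le_findGreatest (P := fun j => x j ≤ t - Lt) (show m ≤ n - 1 by omega) hbase
        have hj'le : j' ≤ n - 1 := Nat.findGreatest_le _
        have hj'n : j' < n := by omega
        have hxj' : x j' ≤ t - Lt := by
          rw [hj'def]
          exact Nat.findGreatest_spec (P := fun j => x j ≤ t - Lt) (show m ≤ n - 1 by omega) hbase
        have hu1 : t - Lt ≤ x (j' + 1) := by
          rcases Nat.lt_or_ge j' (n - 1) with hc | hc
          · by_contra hcon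
            push_neg at hcon
            exact Nat.findGreatest_is_greatest (Nat.lt_succ_self j') (by omega) hcon.le
          · have he : j' + 1 = n := by omega
            rw [he]; linarith [htb, hxnLt]
        have hS0 : 0 ≤ h j' / l j' := (hm0 hmltn).trans (hsorted m j' hj'm)
        refine ⟨h j' / l j', ⟨(⟨j', hj'n⟩ : Fin n).castSucc, by rw [hLcast, hHcast]⟩, ?_⟩
        have hfin : ∑ j ∈ range n, ((h j / l j - h j' / l j') * c j
              + l j * max (h j' / l j' - h j / l j) 0)
            = ∑ j ∈ Ico (j' + 1) n, (h j / l j - h j' / l j') * l j := by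
          rw [range_eq_Ico,
            ← Finset.sum_Ico_consecutive _ (Nat.zero_le (j' + 1)) (by omega : j' + 1 ≤ n)]
          have hz : ∑ j ∈ Ico 0 (j' + 1), ((h j / l j - h j' / l j') * c j
              + l j * max (h j' / l j' - h j / l j) 0) = 0 := by
            apply Finset.sum_eq_zero
            intro j hj
            rw [mem_Ico] at hj
            rcases Nat.lt_or_ge j j' with hlt | hge
            · rw [hcfulln j (by omega),
                max_eq_left (sub_nonneg.mpr (hsorted j j' (by omega)))]
              ring
            · have he : j = j' := by omega
              subst he
              rw [sub_self, zero_mul]; simp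
          rw [hz, zero_add]
          apply Finset.sum_congr rfl
          intro j hj
          rw [mem_Ico] at hj
          rw [hcfulln j hj.2,
            max_eq_right (sub_nonpos.mpr (hsorted j' j (by omega))), mul_zero, add_zero]
        have hsbarS : h j' / l j' ≤ h (n - 1) / l (n - 1) := hsorted j' (n - 1) (by omega)
        have hsbar0 : 0 ≤ h (n - 1) / l (n - 1) := hS0.trans hsbarS
        have htailh0 : ∀ k', 0 ≤ h (n + k') := by
          intro k'
          have h1 : 0 ≤ h (n + k') / l (n + k') :=
            hsbar0.trans (hsorted (n - 1) (n + k') (by omega))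
          have h2 := mul_nonneg h1 (hl (n + k')).le
          rwa [div_mul_cancel₀ _ (hl (n + k')).ne'] at h2
        have hMpos_eq : Mpos = ∑' k', h (n + k') := by
          rw [hMposdef]; exact tsum_congr fun k' => max_eq_left (htailh0 k')
        have key2 : h (n - 1) / l (n - 1) * (Lt - (t - x n))
            ≤ (∑' k', h (n + k')) - ∑' k', h (n + k') / l (n + k') * c (n + k') := by
          rw [← Summable.tsum_sub hShtail hSphitail]
          have e7 : h (n - 1) / l (n - 1) * (Lt - (t - x n))
              = ∑' k', h (n - 1) / l (n - 1) * (l (n + k') - c (n + k')) := by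
            rw [tsum_mul_left, Summable.tsum_sub hSl' hSctail, hCtail, ← hLtdef]
          rw [e7]
          apply Summable.tsum_le_tsum _ ((hSl'.sub hSctail).mul_left _) (hShtail.sub hSphitail)
          intro k'
          have hdm : h (n + k') / l (n + k') * l (n + k') = h (n + k') :=
            div_mul_cancel₀ _ (hl _).ne'
          calc h (n - 1) / l (n - 1) * (l (n + k') - c (n + k'))
              ≤ h (n + k') / l (n + k') * (l (n + k') - c (n + k')) :=
                mul_le_mul_of_nonneg_right (hsorted (n - 1) (n + k') (by omega))
                  (by linarith [hcl (n + k')])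
            _ = h (n + k') - h (n + k') / l (n + k') * c (n + k') := by
                rw [mul_sub, hdm]
        have hIl : ∑ j ∈ Ico (j' + 1) n, l j = x n - x (j' + 1) := by
          rw [Finset.sum_Ico_eq_sub _ (by omega : j' + 1 ≤ n)]
          have e1 : x n = a + ∑ i ∈ range n, l i := rfl
          have e2 : x (j' + 1) = a + ∑ i ∈ range (j' + 1), l i := rfl
          linarith
        have hmid : ∑ j ∈ Ico (j' + 1) n, (h j / l j - h j' / l j') * l j
            ≤ (h (n - 1) / l (n - 1) - h j' / l j') * (x n - x (j' + 1)) := by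
          rw [← hIl, Finset.mul_sum]
          apply Finset.sum_le_sum
          intro j hj
          rw [mem_Ico] at hj
          apply mul_le_mul_of_nonneg_right _ (hl j).le
          have := hsorted j (n - 1) (by omega)
          linarith
        have htt : ∑' k', (h (n + k') / l (n + k') - h j' / l j') * c (n + k')
            = (∑' k', h (n + k') / l (n + k') * c (n + k'))
              - h j' / l j' * (t - x n) := by
          have e8 : ∀ k' : ℕ, (h (n + k') / l (n + k') - h j' / l j') * c (n + k')
              = h (n + k') / l (n + k') * c (n + k') - h j' / l j' * c (n + k') :=
            fun k' => by ring
          rw [tsum_congr e8, Summable.tsum_sub hSphitail (hSctail.mul_left _), tsum_mul_left, hCtail]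
        rw [hfin, max_eq_left hS0, htt, hMpos_eq]
        have k3 : h j' / l j' * (Lt + x (j' + 1) - t)
            ≤ h (n - 1) / l (n - 1) * (Lt + x (j' + 1) - t) :=
          mul_le_mul_of_nonneg_right hsbarS (by linarith)
        have eA : h (n - 1) / l (n - 1) * (Lt - (t - x n))
            = h (n - 1) / l (n - 1) * (Lt + x (j' + 1) - t)
              + h (n - 1) / l (n - 1) * (x n - x (j' + 1)) := by ring
        have eB : (h (n - 1) / l (n - 1) - h j' / l j') * (x n - x (j' + 1))
            = h (n - 1) / l (n - 1) * (x n - x (j' + 1))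
              - h j' / l j' * (x n - x (j' + 1)) := by ring
        have eD : Lt * (h j' / l j') - h j' / l j' * (t - x n)
            = h j' / l j' * (Lt + x (j' + 1) - t)
              + h j' / l j' * (x n - x (j' + 1)) := by ring
        linarith [hmid, key2, k3, eA, eB, eD]
  obtain ⟨S, ⟨k1, hk1⟩, hSle⟩ := hup
  have hub : f t - faceArrange a f0 L H π t ≤ Mpos := by
    have h1 := hLB k1
    rw [hk1] at h1
    have h2 := hD S
    linarith [h1, h2, hSle]
  have hlb : -Mneg ≤ f t - faceArrange a f0 L H π t := by
    have h1 := hlow k0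
    rw [← hk0] at h1
    exact h1
  rw [hgdef, abs_le]
  constructor
  · have hm1 : Mneg ≤ max Mneg Mpos := le_max_left _ _
    linarith [hlb]
  · have hm2 : Mpos ≤ max Mneg Mpos := le_max_right _ _
    linarith [hub]
end

section
/- Let f be a piecewise linear convex function on [a,b] with faces of both signs, let s be the location of the minimum of f, and let f←(t) = f(s−t) − f(s) on [0, s−a] and f→(t) = f(s+t) − f(s) on [0, b−s] be the pre- and post-minimum functions, each piecewise linear convex with nonnegative-slope faces. For c ∈ ℝ let T_c f(t) = f(t) + c t and let s_c be the location of the minimum of T_c f, and s_{n,m} the location of the minimum of T_c f↓_{n,m}, where f↓_{n,m} is the lower sandwich built from n faces of f← and m faces of f→. Then: if c ≥ 0, s_{n,m} ≤ s_c ≤ s_{n,m} + l̃ₙ←, and if c < 0, s_{n,m} − l̃ₘ→ ≤ s_c ≤ s_{n,m}, where l̃ₙ← = Σ_{k>n} lₖ← and l̃ₘ→ = Σ_{k>m} lₖ→. -/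
open Finset

/-- **Location of the minimum of the tilted sandwich.**
Let `f` be a piecewise linear convex function on `[a,b]`, with pre-minimum faces
`(lₖ←, hₖ←)` and post-minimum faces `(lₖ→, hₖ→)` (all lengths positive, all heights
nonnegative, lengths summable).  For a tilt `c ∈ ℝ`, the location `s_c` of the minimum of
`T_c f` occurs after all faces of slope less than `-c`, i.e. (measuring from the location
`s` of the minimum of `f`)
`s_c - s = -Σₖ lₖ← 1{c < hₖ←/lₖ←} ... `; explicitly, with `s_c` and `s_{n,m}` given by
`s_c = Σₖ lₖ← 1{c < hₖ←/lₖ←} + Σₖ lₖ→ 1{c < -hₖ→/lₖ→}` and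
`s_{n,m} = Σ_{k<n} lₖ← 1{c < hₖ←/lₖ←} + l̃ₙ← 1{c<0} + Σ_{k<m} lₖ→ 1{c < -hₖ→/lₖ→} + l̃ₘ→ 1{c<0}`,
we have: if `c ≥ 0` then `s_{n,m} ≤ s_c ≤ s_{n,m} + l̃ₙ←`, and if `c < 0` then
`s_{n,m} - l̃ₘ→ ≤ s_c ≤ s_{n,m}`, where `l̃ₙ← = Σ_{k ≥ n} lₖ←` and `l̃ₘ→ = Σ_{k ≥ m} lₖ→`. -/
theorem tilted_minimum_location
    (c : ℝ) (n m : ℕ)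
    (lL hL lR hR : ℕ → ℝ)
    (hlL : ∀ k, 0 < lL k) (hlR : ∀ k, 0 < lR k)
    (hhL : ∀ k, 0 ≤ hL k) (hhR : ∀ k, 0 ≤ hR k)
    (hsL : Summable lL) (hsR : Summable lR)
    (sc snm tailL tailR : ℝ)
    (hsc : sc = (∑' k : ℕ, if c < hL k / lL k then lL k else 0)
      + (∑' k : ℕ, if c < -(hR k / lR k) then lR k else 0))
    (htailL : tailL = ∑' k : ℕ, lL (n + k))
    (htailR : tailR = ∑' k : ℕ, lR (m + k))
    (hsnm : snm = (∑ k ∈ Finset.range n, if c < hL k / lL k then lL k else 0)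
      + (if c < 0 then tailL else 0)
      + (∑ k ∈ Finset.range m, if c < -(hR k / lR k) then lR k else 0)
      + (if c < 0 then tailR else 0)) :
    (0 ≤ c → snm ≤ sc ∧ sc ≤ snm + tailL) ∧
    (c < 0 → snm - tailR ≤ sc ∧ sc ≤ snm) := by
  have nnL : ∀ k, 0 ≤ (if c < hL k / lL k then lL k else 0) := fun k => by
    split_ifs with h; exacts [(hlL k).le, le_rfl]
  have leL : ∀ k, (if c < hL k / lL k then lL k else 0) ≤ lL k := fun k => by
    split_ifs with h; exacts [le_rfl, (hlL k).le]
  have nnR : ∀ k, 0 ≤ (if c < -(hR k / lR k) then lR k else 0) := fun k => by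
    split_ifs with h; exacts [(hlR k).le, le_rfl]
  have leR : ∀ k, (if c < -(hR k / lR k) then lR k else 0) ≤ lR k := fun k => by
    split_ifs with h; exacts [le_rfl, (hlR k).le]
  have hgL : Summable (fun k => if c < hL k / lL k then lL k else 0) :=
    Summable.of_nonneg_of_le nnL leL hsL
  have hgR : Summable (fun k => if c < -(hR k / lR k) then lR k else 0) :=
    Summable.of_nonneg_of_le nnR leR hsR
  have hsLshift : Summable (fun k => lL (k + n)) := (summable_nat_add_iff n).mpr hsL
  have hsRshift : Summable (fun k => lR (k + m)) := (summable_nat_add_iff m).mpr hsR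
  have htailL' : tailL = ∑' k : ℕ, lL (k + n) := by
    rw [htailL]; congr 1; ext k; rw [Nat.add_comm]
  have htailR' : tailR = ∑' k : ℕ, lR (k + m) := by
    rw [htailR]; congr 1; ext k; rw [Nat.add_comm]
  constructor
  · intro hc
    have hRzero : ∀ k, (if c < -(hR k / lR k) then lR k else 0) = 0 := fun k => by
      rw [if_neg]
      push_neg
      have : 0 ≤ hR k / lR k := div_nonneg (hhR k) (hlR k).le
      linarith
    have hB : (∑' k : ℕ, if c < -(hR k / lR k) then lR k else 0) = 0 := by
      simp [hRzero]
    have hsplit := Summable.sum_add_tsum_nat_add n hgL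
    have htail0 : 0 ≤ ∑' k : ℕ, (if c < hL (k + n) / lL (k + n) then lL (k + n) else 0) :=
      tsum_nonneg fun k => nnL (k + n)
    have htail1 : (∑' k : ℕ, (if c < hL (k + n) / lL (k + n) then lL (k + n) else 0))
        ≤ ∑' k : ℕ, lL (k + n) :=
      Summable.tsum_le_tsum (fun k => leL (k + n)) ((summable_nat_add_iff (f := fun k => if c < hL k / lL k then lL k else 0) n).mpr hgL) hsLshift
    have hc' : ¬ c < 0 := not_lt.mpr hc
    rw [hsc, hB, hsnm, if_neg hc', if_neg hc']
    constructor
    · simp only [hRzero, Finset.sum_const_zero]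
      linarith [hsplit]
    · simp only [hRzero, Finset.sum_const_zero]
      rw [htailL']
      linarith [hsplit]
  · intro hc
    have hLall : ∀ k, (if c < hL k / lL k then lL k else 0) = lL k := fun k => by
      rw [if_pos]
      have : 0 ≤ hL k / lL k := div_nonneg (hhL k) (hlL k).le
      linarith
    have hA : (∑' k : ℕ, if c < hL k / lL k then lL k else 0) = ∑' k, lL k := by
      congr 1; ext k; exact hLall k
    have hAsplit := Summable.sum_add_tsum_nat_add n hsL
    have hsplit := Summable.sum_add_tsum_nat_add m hgR
    have htail0 : 0 ≤ ∑' k : ℕ, (if c < -(hR (k + m) / lR (k + m)) then lR (k + m) else 0) :=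
      tsum_nonneg fun k => nnR (k + m)
    have htail1 : (∑' k : ℕ, (if c < -(hR (k + m) / lR (k + m)) then lR (k + m) else 0))
        ≤ ∑' k : ℕ, lR (k + m) :=
      Summable.tsum_le_tsum (fun k => leR (k + m)) ((summable_nat_add_iff (f := fun k => if c < -(hR k / lR k) then lR k else 0) m).mpr hgR) hsRshift
    have hFL : (∑ k ∈ Finset.range n, if c < hL k / lL k then lL k else 0)
        = ∑ k ∈ Finset.range n, lL k := Finset.sum_congr rfl fun k _ => hLall k
    rw [hsc, hA, hsnm, if_pos hc, if_pos hc, hFL, htailL', htailR']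
    constructor
    · linarith [hAsplit, hsplit]
    · linarith [hAsplit, hsplit]
end

section
/- Let X be a nonnegative random variable, α > 1, ρ ∈ (0,1), and suppose E[X] < ∞ and X satisfies X =ᵈ (1−U)^{1/α} X + U^{1/α} S with (S, U) independent of X, U ∼ Beta(1,ρ), and E[S] < ∞. Then E[X] = (Γ(1/α)Γ(1+ρ)/Γ(ρ+1/α)) · E[S]. -/
/-!
Taking expectations in the distributional identity, independence of `X` from `(S, U)` gives
`E[X] = E[(1 - U)^c] E[X] + E[U^c] E[S]` with `c = 1/α`. Both moments of `U ∼ Beta(1, ρ)` are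
Beta integrals: `E[(1 - U)^c] = ρ B(1, ρ + c) = ρ / (ρ + c)` and
`E[U^c] = ρ B(c + 1, ρ) = c / (ρ + c) · ρ B(c, ρ)`. As `E[X]` is finite we may solve for it:
`E[X] = ρ B(c, ρ) E[S] = Γ(c) Γ(1 + ρ) / Γ(ρ + c) · E[S]`.
-/

open MeasureTheory ProbabilityTheory

/-- The `Beta(1, ρ)` distribution on `[0,1]`, with density `u ↦ ρ (1-u)^(ρ-1)`. -/
noncomputable def betaOneLaw (ρ : ℝ) : Measure ℝ :=
  (volume.restrict (Set.Ioo (0 : ℝ) 1)).withDensity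
    fun u => ENNReal.ofReal (ρ * (1 - u) ^ (ρ - 1))

open Set

theorem ProbabilityTheory.beta_one_left {b : ℝ} (hb : 0 < b) : beta 1 b = b⁻¹ := by
  rw [beta, Real.Gamma_one, add_comm, Real.Gamma_add_one hb.ne']
  have hΓ : Real.Gamma b ≠ 0 := (Real.Gamma_pos_of_pos hb).ne'
  field_simp

theorem ProbabilityTheory.beta_add_one_left {a b : ℝ} (ha : a ≠ 0) (hab : a + b ≠ 0) :
    beta (a + 1) b = a / (a + b) * beta a b := by
  rw [beta, beta, Real.Gamma_add_one ha, add_right_comm, Real.Gamma_add_one hab]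
  field_simp

theorem ProbabilityTheory.mul_beta_eq_Gamma_mul_Gamma_one_add_div {a b : ℝ} (hb : b ≠ 0) :
    b * beta a b = Real.Gamma a * Real.Gamma (1 + b) / Real.Gamma (b + a) := by
  rw [beta, add_comm 1 b, Real.Gamma_add_one hb, add_comm b a]
  ring

theorem intervalIntegral_rpow_mul_one_sub_rpow {a b : ℝ} (ha : 0 < a) (hb : 0 < b) :
    ∫ x in (0 : ℝ)..1, x ^ (a - 1) * (1 - x) ^ (b - 1) = beta a b := by
  have h : ∫ x in (0 : ℝ)..1, (x : ℂ) ^ ((a : ℂ) - 1) * (1 - (x : ℂ)) ^ ((b : ℂ) - 1) =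
      ↑(∫ x in (0 : ℝ)..1, x ^ (a - 1) * (1 - x) ^ (b - 1)) := by
    rw [← intervalIntegral.integral_ofReal]
    refine intervalIntegral.integral_congr fun x hx => ?_
    rw [uIcc_of_le zero_le_one] at hx
    push_cast
    rw [Complex.ofReal_cpow hx.1, Complex.ofReal_cpow (sub_nonneg.2 hx.2)]
    push_cast
    ring
  rw [beta_eq_betaIntegralReal a b ha hb, Complex.betaIntegral, h, Complex.ofReal_re]

theorem ae_mem_Ioo_betaOneLaw (ρ : ℝ) : ∀ᵐ u ∂betaOneLaw ρ, u ∈ Ioo 0 1 := by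
  rw [ae_iff, show {u | u ∉ Ioo (0 : ℝ) 1} = (Ioo 0 1)ᶜ from rfl, betaOneLaw,
    withDensity_apply _ measurableSet_Ioo.compl,
    Measure.restrict_restrict measurableSet_Ioo.compl, compl_inter_self]
  simp

theorem integral_betaOneLaw {ρ : ℝ} (hρ : 0 ≤ ρ) (g : ℝ → ℝ) :
    ∫ u, g u ∂betaOneLaw ρ = ∫ u in Ioo 0 1, ρ * (1 - u) ^ (ρ - 1) * g u := by
  rw [betaOneLaw, integral_withDensity_eq_integral_toReal_smul₀ (by fun_prop)
    (ae_of_all _ fun _ => ENNReal.ofReal_lt_top)]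
  refine setIntegral_congr_fun measurableSet_Ioo fun u hu => ?_
  rw [ENNReal.toReal_ofReal (mul_nonneg hρ (Real.rpow_nonneg (sub_pos.2 hu.2).le _)), smul_eq_mul]

theorem integral_rpow_mul_one_sub_rpow_betaOneLaw {ρ a b : ℝ} (hρ : 0 ≤ ρ) (ha : 0 < a + 1)
    (hb : 0 < ρ + b) :
    ∫ u, u ^ a * (1 - u) ^ b ∂betaOneLaw ρ = ρ * beta (a + 1) (ρ + b) := by
  rw [integral_betaOneLaw hρ, ← intervalIntegral_rpow_mul_one_sub_rpow ha hb,
    ← intervalIntegral.integral_const_mul, intervalIntegral.integral_of_le zero_le_one,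
    integral_Ioc_eq_integral_Ioo]
  refine setIntegral_congr_fun measurableSet_Ioo fun u hu => ?_
  have h1u : 0 < 1 - u := sub_pos.2 hu.2
  rw [add_sub_cancel_right, add_sub_right_comm, Real.rpow_add h1u]
  ring

theorem integral_rpow_mul_one_sub_rpow_of_map_eq_betaOneLaw {Ω : Type*} [MeasurableSpace Ω]
    {μ : Measure Ω} {U : Ω → ℝ} {ρ a b : ℝ} (hUm : AEMeasurable U μ)
    (hU : μ.map U = betaOneLaw ρ) (hρ : 0 ≤ ρ) (ha : 0 < a + 1) (hb : 0 < ρ + b) :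
    ∫ ω, U ω ^ a * (1 - U ω) ^ b ∂μ = ρ * beta (a + 1) (ρ + b) := by
  rw [← integral_rpow_mul_one_sub_rpow_betaOneLaw hρ ha hb, ← hU,
    integral_map hUm (by fun_prop)]

theorem integrable_rpow_of_ae_mem_Icc {Ω : Type*} [MeasurableSpace Ω] {μ : Measure Ω}
    [IsFiniteMeasure μ] {f : Ω → ℝ} (hf : AEMeasurable f μ)
    (hf01 : ∀ᵐ ω ∂μ, f ω ∈ Icc 0 1) {c : ℝ} (hc : 0 ≤ c) :
    Integrable (fun ω => f ω ^ c) μ := by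
  refine .of_bound (hf.pow_const c).aestronglyMeasurable 1 ?_
  filter_upwards [hf01] with ω hω
  rw [Real.norm_of_nonneg (Real.rpow_nonneg hω.1 c)]
  exact Real.rpow_le_one hω.1 hω.2 hc

theorem integral_eq_mul_integral_add_mul_integral_of_map_eq {Ω : Type*} [MeasurableSpace Ω]
    {μ : Measure Ω} {A B X S : Ω → ℝ} (hA : Integrable A μ) (hB : Integrable B μ)
    (hX : Integrable X μ) (hS : Integrable S μ) (hAX : IndepFun A X μ) (hBS : IndepFun B S μ)
    (hmap : μ.map (fun ω => A ω * X ω + B ω * S ω) = μ.map X) :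
    μ[X] = μ[A] * μ[X] + μ[B] * μ[S] := by
  have hAXi : Integrable (fun ω => A ω * X ω) μ := hAX.integrable_mul hA hX
  have hBSi : Integrable (fun ω => B ω * S ω) μ := hBS.integrable_mul hB hS
  calc μ[X] = ∫ y, y ∂μ.map X :=
        (integral_map hX.aemeasurable aestronglyMeasurable_id).symm
    _ = ∫ ω, A ω * X ω + B ω * S ω ∂μ := by
        rw [← hmap]
        exact integral_map (hAXi.add hBSi).aemeasurable aestronglyMeasurable_id
    _ = μ[A] * μ[X] + μ[B] * μ[S] := by
        rw [integral_add hAXi hBSi, ← hAX.integral_mul_eq_mul_integral hA.1 hX.1,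
          ← hBS.integral_mul_eq_mul_integral hB.1 hS.1]
        rfl

theorem perpetuity_mean_general
    {Ω : Type*} [MeasureSpace Ω] [IsProbabilityMeasure (ℙ : Measure Ω)]
    (α ρ : ℝ) (hα : 1 < α) (hρ : ρ ∈ Set.Ioo (0 : ℝ) 1)
    (X S U : Ω → ℝ)
    (hUm : Measurable U)
    (hXint : Integrable X ℙ) (hSint : Integrable S ℙ)
    (hU : Measure.map U ℙ = betaOneLaw ρ)
    (hSU : IndepFun S U ℙ)
    (hX_SU : IndepFun X (fun ω => (S ω, U ω)) ℙ)
    (hperp : Measure.map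
        (fun ω => (1 - U ω) ^ (1 / α) * X ω + (U ω) ^ (1 / α) * S ω) ℙ
      = Measure.map X ℙ) :
    ∫ ω, X ω ∂ℙ =
      (Real.Gamma (1 / α) * Real.Gamma (1 + ρ) / Real.Gamma (ρ + 1 / α)) *
        ∫ ω, S ω ∂ℙ := by
  set c := 1 / α
  have hc : 0 < c := one_div_pos.2 (by linarith)
  clear_value c
  have hρ0 : 0 < ρ := hρ.1
  have hU_mem : ∀ᵐ ω, U ω ∈ Icc 0 1 :=
    ae_of_ae_map hUm.aemeasurable <|
      hU ▸ (ae_mem_Ioo_betaOneLaw ρ).mono fun _ h => Ioo_subset_Icc_self h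
  have hA : Integrable (fun ω => (1 - U ω) ^ c) :=
    integrable_rpow_of_ae_mem_Icc (by fun_prop)
      (hU_mem.mono fun _ hu => ⟨sub_nonneg.2 hu.2, sub_le_self _ hu.1⟩) hc.le
  have hB : Integrable (fun ω => U ω ^ c) :=
    integrable_rpow_of_ae_mem_Icc hUm.aemeasurable hU_mem hc.le
  have hmomA : ∫ ω, (1 - U ω) ^ c = ρ * beta 1 (ρ + c) := by
    simpa using integral_rpow_mul_one_sub_rpow_of_map_eq_betaOneLaw (a := 0) (b := c)
      hUm.aemeasurable hU hρ0.le (by norm_num) (by linarith)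
  have hmomB : ∫ ω, U ω ^ c = ρ * beta (c + 1) ρ := by
    simpa using integral_rpow_mul_one_sub_rpow_of_map_eq_betaOneLaw (a := c) (b := 0)
      hUm.aemeasurable hU hρ0.le (by linarith) (by linarith)
  have hAX : IndepFun (fun ω => (1 - U ω) ^ c) X :=
    (hX_SU.comp measurable_id (by fun_prop : Measurable fun p : ℝ × ℝ => (1 - p.2) ^ c)).symm
  have hBS : IndepFun (fun ω => U ω ^ c) S :=
    hSU.symm.comp (by fun_prop : Measurable fun u : ℝ => u ^ c) measurable_id
  have key :=
    integral_eq_mul_integral_add_mul_integral_of_map_eq hA hB hXint hSint hAX hBS hperp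
  rw [hmomA, hmomB, beta_one_left (by linarith), beta_add_one_left hc.ne' (by linarith)] at key
  rw [← mul_beta_eq_Gamma_mul_Gamma_one_add_div hρ0.ne']
  field_simp at key
  refine mul_left_cancel₀ (by positivity : c * (ρ + c) ≠ 0) ?_
  linear_combination key

/-- **Mean of the solution of the stable-meander perpetuity.**  Let `X ≥ 0` be integrable,
`α > 1`, `ρ ∈ (0,1)`, and suppose `X =ᵈ (1-U)^{1/α} X + U^{1/α} S` with `(S,U)`
independent of `X`, `S` and `U` independent, `U ∼ Beta(1,ρ)` and `E[S] < ∞`.  Then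
`E[X] = Γ(1/α) Γ(1+ρ) / Γ(ρ+1/α) · E[S]`. -/
theorem perpetuity_mean
    {Ω : Type*} [MeasureSpace Ω] [IsProbabilityMeasure (ℙ : Measure Ω)]
    (α ρ : ℝ) (hα : 1 < α) (hρ : ρ ∈ Set.Ioo (0 : ℝ) 1)
    (X S U : Ω → ℝ)
    (hXm : Measurable X) (hSm : Measurable S) (hUm : Measurable U)
    (hX0 : ∀ ω, 0 ≤ X ω)
    (hXint : Integrable X ℙ) (hSint : Integrable S ℙ)
    (hU : Measure.map U ℙ = betaOneLaw ρ)
    (hSU : IndepFun S U ℙ)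
    (hX_SU : IndepFun X (fun ω => (S ω, U ω)) ℙ)
    (hperp : Measure.map
        (fun ω => (1 - U ω) ^ (1 / α) * X ω + (U ω) ^ (1 / α) * S ω) ℙ
      = Measure.map X ℙ) :
    ∫ ω, X ω ∂ℙ =
      (Real.Gamma (1 / α) * Real.Gamma (1 + ρ) / Real.Gamma (ρ + 1 / α)) *
        ∫ ω, S ω ∂ℙ :=
  perpetuity_mean_general α ρ hα hρ X S U hUm hXint hSint hU hSU hX_SU hperp
end

section
/- Let Z = (Z_t)_{t∈[0,1]} be a right-continuous stochastic process with stationary independent increments, Z₀ = 0, such that 0 is regular for (0,∞), and with P(Z₁ > 0) = ρ. Let Z̄₁ = sup_{t∈[0,1]} Z_t and let S be distributed as Z₁ conditioned on {Z₁ > 0}. Then for every x > 0: ρ P(S > x) ≤ P(Z̄₁ > x) ≤ P(S > x). -/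
/-!
Let `A k` be the event that the skeleton `k ↦ Z (k / N)` first exceeds `x` at step `k`.
The increment `Z 1 - Z (k / N)` is independent of `A k` and positive with probability `ρ`, and on
both events `Z 1 > x`; summing over the disjoint `A k` gives
`ρ P(max_{k ≤ N} Z (k / N) > x) ≤ P(Z₁ > x)`, a discrete form of the strong Markov argument.
By right-continuity the dyadic skeletons exhaust `{∃ s ∈ [0,1], Z s > x}`, hence
`ρ P(∃ s, Z s > x) ≤ P(Z₁ > x) = ρ P(S > x)`, which is the upper bound. Letting `x → ∞` in the
same estimate shows that the paths are a.s. bounded on `[0,1]`, so `Z̄₁ ≥ Z₁` a.s., which gives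
the lower bound.
-/

open MeasureTheory ProbabilityTheory Finset Filter
open scoped ENNReal Topology

lemma exists_lt_apply_dyadic_of_continuousWithinAt {f : ℝ → ℝ} {s x : ℝ}
    (hf : ContinuousWithinAt f (Set.Ici s) s) (hs : s ∈ Set.Icc 0 1) (hx : x < f s) :
    ∃ n k : ℕ, k ≤ 2 ^ n ∧ x < f (k / 2 ^ n) := by
  have hlim : Tendsto (fun n : ℕ => (⌈s * 2 ^ n⌉₊ : ℝ) / 2 ^ n) atTop (𝓝[≥] s) :=
    tendsto_nhdsWithin_iff.2 ⟨(tendsto_nat_ceil_mul_div_atTop hs.1).comp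
      (tendsto_pow_atTop_atTop_of_one_lt one_lt_two),
      .of_forall fun n => Set.mem_Ici.2 <| (le_div_iff₀ (pow_pos two_pos n)).2 (Nat.le_ceil _)⟩
  obtain ⟨n, hn⟩ := ((hf.tendsto.comp hlim).eventually (eventually_gt_nhds hx)).exists
  refine ⟨n, ⌈s * 2 ^ n⌉₊, Nat.ceil_le.2 ?_, hn⟩
  push_cast
  exact mul_le_of_le_one_left (by positivity) hs.2

namespace ProbabilityTheory

variable {Ω : Type*} [MeasurableSpace Ω] {μ : Measure Ω}

lemma iIndepFun.indepFun_of_measurable_iSup {ι : Type*} {β : ι → Type*}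
    [mβ : ∀ i, MeasurableSpace (β i)] {f : ∀ i, Ω → β i} (hf : iIndepFun f μ)
    (hfm : ∀ i, Measurable (f i)) {S T : Set ι} (hST : Disjoint S T)
    {γ γ' : Type*} [MeasurableSpace γ] [MeasurableSpace γ'] {g : Ω → γ} {h : Ω → γ'}
    (hg : Measurable[⨆ i ∈ S, (mβ i).comap (f i)] g)
    (hh : Measurable[⨆ i ∈ T, (mβ i).comap (f i)] h) :
    IndepFun g h μ :=
  (IndepFun_iff_Indep g h μ).2 <| indep_of_indep_of_le
    (indep_iSup_of_disjoint (fun i => (hfm i).comap_le) hf.iIndep hST) hg.comap_le hh.comap_le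

lemma iIndepFun.indepFun_partialSum_sub {D : ℕ → Ω → ℝ} {n k : ℕ}
    (hD : iIndepFun (fun i : Fin n => D i) μ) (hDm : ∀ i, Measurable (D i)) (hk : k ≤ n) :
    IndepFun (fun ω (j : Fin (k + 1)) => ∑ i ∈ range j, D i ω)
      (fun ω => ∑ i ∈ range n, D i ω - ∑ i ∈ range k, D i ω) μ := by
  have measurable_of_mem {s : Set (Fin n)} {i : ℕ} (hi : i < n) (his : (⟨i, hi⟩ : Fin n) ∈ s) :
      Measurable[⨆ i ∈ s, MeasurableSpace.comap (D i) inferInstance] (D i) :=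
    (comap_measurable (D i)).mono
      (le_iSup₂ (f := fun (i : Fin n) (_ : i ∈ s) => MeasurableSpace.comap (D i) inferInstance)
        ⟨i, hi⟩ his) le_rfl
  refine hD.indepFun_of_measurable_iSup (fun i => hDm i)
    (S := {i | (i : ℕ) < k}) (T := {i | k ≤ (i : ℕ)})
    (Set.disjoint_left.2 fun i (hi : (i : ℕ) < k) (hi' : k ≤ (i : ℕ)) => by omega) ?_ ?_
  · -- `@` so that `measurable_pi_iff` is used for the sub-σ-algebra, not the ambient instance
    refine (@measurable_pi_iff Ω _ _ (_) _ _).2 fun j => Finset.measurable_sum _ fun i hi => ?_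
    have : i < j := mem_range.1 hi
    exact measurable_of_mem (by omega) (show i < k by omega)
  · simp_rw [← Finset.sum_Ico_eq_sub _ hk]
    refine Finset.measurable_sum _ fun i hi => ?_
    obtain ⟨hki, hin⟩ := mem_Ico.1 hi
    exact measurable_of_mem hin hki

lemma mul_measure_exists_lt_le_of_indepFun {S : ℕ → Ω → ℝ} (hS : ∀ k, Measurable (S k))
    {N : ℕ} {ρ : ℝ≥0∞} (hρ : ρ ≤ 1)
    (hindep : ∀ k < N, IndepFun (fun ω (j : Fin (k + 1)) => S j ω) (fun ω => S N ω - S k ω) μ)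
    (hpos : ∀ k < N, ρ ≤ μ {ω | 0 < S N ω - S k ω}) (x : ℝ) :
    ρ * μ {ω | ∃ k ≤ N, x < S k ω} ≤ μ {ω | x < S N ω} := by
  set B : ℕ → Set Ω := fun k => {ω | x < S k ω}
  -- `disjointed B k` is the event that `S` first exceeds `x` at time `k`
  set A := disjointed B
  have hA : {ω | ∃ k ≤ N, x < S k ω} = ⋃ k ∈ range (N + 1), A k := by
    rw [biUnion_range_succ_disjointed, partialSups_eq_biSup]
    ext ω
    simp [B]
  have hAm : ∀ k, MeasurableSet (A k) :=
    MeasurableSet.disjointed fun k => measurableSet_lt measurable_const (hS k)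
  have hstep : ∀ k ≤ N, ρ * μ (A k) ≤ μ (A k ∩ B N) := by
    intro k hk
    rcases hk.lt_or_eq with hk | rfl
    · have hpast : MeasurableSet[MeasurableSpace.comap (fun ω (j : Fin (k + 1)) => S j ω)
          inferInstance] (A k) := by
        let _ := MeasurableSpace.comap (fun ω (j : Fin (k + 1)) => S j ω) inferInstance
        have hB : ∀ j ≤ k, MeasurableSet (B j) := fun j hj => measurableSet_lt measurable_const
          ((measurable_pi_apply (⟨j, by omega⟩ : Fin (k + 1))).comp
            (comap_measurable (fun ω (j : Fin (k + 1)) => S j ω)))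
        rw [show A k = _ from disjointed_eq_inter_compl B k]
        exact (hB k le_rfl).inter (.iInter fun j => .iInter fun hj => (hB j hj.le).compl)
      calc ρ * μ (A k) ≤ μ (A k) * μ {ω | 0 < S N ω - S k ω} := by
            rw [mul_comm]; gcongr; exact hpos k hk
        _ = μ (A k ∩ {ω | 0 < S N ω - S k ω}) :=
            ((hindep k hk).meas_inter hpast
              (measurableSet_lt measurable_const (comap_measurable _))).symm
        _ ≤ μ (A k ∩ B N) := by
            refine measure_mono fun ω ⟨hωA, hω⟩ => ⟨hωA, ?_⟩
            have : x < S k ω := disjointed_subset B k hωA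
            simp only [B, Set.mem_ofPred_eq] at hω ⊢
            linarith
    · rw [Set.inter_eq_left.2 (disjointed_subset B k)]
      exact mul_le_of_le_one_left' hρ
  calc ρ * μ {ω | ∃ k ≤ N, x < S k ω} ≤ ρ * ∑ k ∈ range (N + 1), μ (A k) := by
        rw [hA]; gcongr; exact measure_biUnion_finset_le _ _
    _ ≤ ∑ k ∈ range (N + 1), μ (A k ∩ B N) := by
        rw [mul_sum]; exact sum_le_sum fun k hk => hstep k (by simpa [Nat.lt_succ_iff] using hk)
    _ = μ (⋃ k ∈ range (N + 1), A k ∩ B N) :=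
        (measure_biUnion_finset (fun i _ j _ hij => ((disjoint_disjointed B hij).mono
          Set.inter_subset_left Set.inter_subset_left)) fun k _ => (hAm k).inter
          (measurableSet_lt measurable_const (hS N))).symm
    _ ≤ μ (B N) := measure_mono (Set.iUnion₂_subset fun k _ => Set.inter_subset_right)

structure HasIndepStationaryIncrements (Z : ℝ → Ω → ℝ) (μ : Measure Ω) : Prop where
  measurable : ∀ t, Measurable (Z t)
  zero : ∀ ω, Z 0 ω = 0
  stationary : ∀ s t : ℝ, 0 ≤ s → s ≤ t →
    μ.map (fun ω => Z t ω - Z s ω) = μ.map (Z (t - s))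
  indep : ∀ (n : ℕ) (t : Fin (n + 1) → ℝ), Monotone t → 0 ≤ t 0 →
    iIndepFun (fun (i : Fin n) ω => Z (t i.succ) ω - Z (t i.castSucc) ω) μ

namespace HasIndepStationaryIncrements

variable {Z : ℝ → Ω → ℝ}

lemma measure_pos_sub (hZ : HasIndepStationaryIncrements Z μ) {s t : ℝ} (hs : 0 ≤ s)
    (hst : s ≤ t) : μ {ω | 0 < Z t ω - Z s ω} = μ {ω | 0 < Z (t - s) ω} := by
  have hmap := congrArg (· (Set.Ioi 0)) (hZ.stationary s t hs hst)
  rwa [Measure.map_apply (f := fun ω => Z t ω - Z s ω)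
      ((hZ.measurable t).sub (hZ.measurable s)) measurableSet_Ioi,
    Measure.map_apply (hZ.measurable _) measurableSet_Ioi] at hmap

lemma sum_range_sub_div (hZ : HasIndepStationaryIncrements Z μ) (N k : ℕ) (ω : Ω) :
    ∑ i ∈ range k, (Z ((i + 1) / N) ω - Z (i / N) ω) = Z (k / N) ω := by
  simpa [hZ.zero] using sum_range_sub (fun i : ℕ => Z (i / N) ω) k

lemma iIndepFun_sub_div (hZ : HasIndepStationaryIncrements Z μ) (N : ℕ) :
    iIndepFun (fun i : Fin N => fun ω => Z ((i + 1) / N) ω - Z (i / N) ω) μ := by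
  have hmono : Monotone fun i : Fin (N + 1) => ((i : ℕ) : ℝ) / N := fun i j hij =>
    div_le_div_of_nonneg_right (by exact_mod_cast hij) N.cast_nonneg
  simpa using hZ.indep N _ hmono (by simp)

variable [IsProbabilityMeasure μ] {ρ : ℝ≥0∞}

lemma mul_measure_exists_lt_div_le (hZ : HasIndepStationaryIncrements Z μ)
    (hpos : ∀ t : ℝ, 0 < t → t ≤ 1 → ρ ≤ μ {ω | 0 < Z t ω}) {N : ℕ} (hN : 0 < N) (x : ℝ) :
    ρ * μ {ω | ∃ k ≤ N, x < Z (k / N) ω} ≤ μ {ω | x < Z 1 ω} := by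
  have hN' : (0 : ℝ) < N := by exact_mod_cast hN
  have hNN : (N : ℝ) / N = 1 := div_self hN'.ne'
  have hwalk := hZ.sum_range_sub_div N
  have h := mul_measure_exists_lt_le_of_indepFun (S := fun k ω => Z (k / N) ω)
    (fun k => hZ.measurable _) ((hpos 1 one_pos le_rfl).trans prob_le_one) (N := N)
    (fun k hk => by
      simpa only [hwalk] using (hZ.iIndepFun_sub_div N).indepFun_partialSum_sub
        (D := fun i ω => Z ((i + 1) / N) ω - Z (i / N) ω)
        (fun i => (hZ.measurable _).sub (hZ.measurable _)) hk.le)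
    (fun k hk => by
      have hkN : (k : ℝ) / N < N / N := by gcongr
      rw [hZ.measure_pos_sub (by positivity) hkN.le]
      exact hpos _ (sub_pos.2 hkN) (by rw [hNN]; linarith [show (0 : ℝ) ≤ k / N by positivity]))
    x
  simpa only [hNN] using h

lemma mul_measure_exists_lt_le (hZ : HasIndepStationaryIncrements Z μ)
    (hrc : ∀ ω t, ContinuousWithinAt (fun s => Z s ω) (Set.Ici t) t)
    (hpos : ∀ t : ℝ, 0 < t → t ≤ 1 → ρ ≤ μ {ω | 0 < Z t ω}) (x : ℝ) :
    ρ * μ {ω | ∃ s : Set.Icc (0 : ℝ) 1, x < Z s ω} ≤ μ {ω | x < Z 1 ω} := by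
  set G : ℕ → Set Ω := fun n => {ω | ∃ k : ℕ, k ≤ 2 ^ n ∧ x < Z (k / 2 ^ n) ω}
  have hG : Monotone G := monotone_nat_of_le_succ fun n ω ⟨k, hk, hkx⟩ =>
    ⟨2 * k, by rw [pow_succ]; omega, by
      rwa [show ((2 * k : ℕ) : ℝ) / 2 ^ (n + 1) = k / 2 ^ n by push_cast; field_simp; ring]⟩
  calc ρ * μ {ω | ∃ s : Set.Icc (0 : ℝ) 1, x < Z s ω} ≤ ρ * μ (⋃ n, G n) := by
        gcongr
        rintro ω ⟨⟨s, hs⟩, hsx⟩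
        exact Set.mem_iUnion.2 (exists_lt_apply_dyadic_of_continuousWithinAt (hrc ω s) hs hsx)
    _ = ⨆ n, ρ * μ (G n) := by rw [hG.measure_iUnion, ENNReal.mul_iSup]
    _ ≤ μ {ω | x < Z 1 ω} := iSup_le fun n => by
        simpa using hZ.mul_measure_exists_lt_div_le hpos (N := 2 ^ n) (by positivity) x

lemma ae_bddAbove_range (hZ : HasIndepStationaryIncrements Z μ)
    (hrc : ∀ ω t, ContinuousWithinAt (fun s => Z s ω) (Set.Ici t) t)
    (hpos : ∀ t : ℝ, 0 < t → t ≤ 1 → ρ ≤ μ {ω | 0 < Z t ω}) (hρ : ρ ≠ 0) :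
    ∀ᵐ ω ∂μ, BddAbove (Set.range fun s : Set.Icc (0 : ℝ) 1 => Z s ω) := by
  rw [ae_iff]
  have hle : ∀ m : ℕ, ρ * μ {ω | ¬BddAbove (Set.range fun s : Set.Icc (0 : ℝ) 1 => Z s ω)}
      ≤ μ {ω | (m : ℝ) < Z 1 ω} := fun m => by
    refine le_trans (mul_le_mul_right (measure_mono fun ω hω => ?_) ρ)
      (hZ.mul_measure_exists_lt_le hrc hpos m)
    obtain ⟨_, ⟨s, rfl⟩, hs⟩ := not_bddAbove_iff.1 hω m
    exact ⟨s, hs⟩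
  have htail : ⨅ m : ℕ, μ {ω | (m : ℝ) < Z 1 ω} = 0 := by
    rw [← Antitone.measure_iInter (s := fun m : ℕ => {ω | (m : ℝ) < Z 1 ω})
      (fun m n hmn ω (h : (n : ℝ) < Z 1 ω) => show (m : ℝ) < Z 1 ω from
        (Nat.cast_le.2 hmn).trans_lt h)
      (fun m => (measurableSet_lt measurable_const (hZ.measurable 1)).nullMeasurableSet)
      ⟨0, measure_ne_top _ _⟩,
      Set.iInter_eq_empty_iff.2 fun ω => ⟨⌈Z 1 ω⌉₊, fun (h : _ < Z 1 ω) => h.not_ge (Nat.le_ceil _)⟩,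
      measure_empty]
  exact (mul_eq_zero.1 (nonpos_iff_eq_zero.1 (htail ▸ le_iInf hle))).resolve_left hρ

end HasIndepStationaryIncrements

end ProbabilityTheory

theorem sup_tail_bounds_levy_general
    {Ω : Type*} [MeasureSpace Ω] [IsProbabilityMeasure (ℙ : Measure Ω)]
    (ρ : ℝ) (hρ : ρ ∈ Set.Ioc (0 : ℝ) 1)
    (Z : ℝ → Ω → ℝ)
    (hZm : ∀ t, Measurable (Z t))
    (hZ0 : ∀ ω, Z 0 ω = 0)
    (hrc : ∀ ω t, ContinuousWithinAt (fun s => Z s ω) (Set.Ici t) t)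
    -- stationary increments
    (hstat : ∀ s t : ℝ, 0 ≤ s → s ≤ t →
      Measure.map (fun ω => Z t ω - Z s ω) ℙ = Measure.map (Z (t - s)) ℙ)
    -- independent increments
    (hindep : ∀ (n : ℕ) (t : Fin (n + 1) → ℝ), Monotone t → 0 ≤ t 0 →
      iIndepFun (m := fun _ : Fin n => (inferInstance : MeasurableSpace ℝ))
        (fun i ω => Z (t i.succ) ω - Z (t i.castSucc) ω) ℙ)
    -- constant positivity probability ρ
    (hpos : ∀ t : ℝ, 0 < t → t ≤ 1 → ℙ {ω | 0 < Z t ω} = ENNReal.ofReal ρ) :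
    ∀ x : ℝ, 0 < x →
      ENNReal.ofReal ρ * (ℙ[|{ω | 0 < Z 1 ω}]) {ω | x < Z 1 ω}
          ≤ ℙ {ω | x < ⨆ s : Set.Icc (0 : ℝ) 1, Z (s : ℝ) ω} ∧
      ℙ {ω | x < ⨆ s : Set.Icc (0 : ℝ) 1, Z (s : ℝ) ω}
          ≤ (ℙ[|{ω | 0 < Z 1 ω}]) {ω | x < Z 1 ω} := by
  intro x hx
  have hZ : HasIndepStationaryIncrements Z ℙ := ⟨hZm, hZ0, hstat, hindep⟩
  have hρ_le (t : ℝ) (ht : 0 < t) (ht' : t ≤ 1) : ENNReal.ofReal ρ ≤ ℙ {ω | 0 < Z t ω} :=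
    (hpos t ht ht').ge
  have hρ0 : ENNReal.ofReal ρ ≠ 0 := ENNReal.ofReal_pos.2 hρ.1 |>.ne'
  have hcond : (ℙ[|{ω | 0 < Z 1 ω}]) {ω | x < Z 1 ω} = ℙ {ω | x < Z 1 ω} / ENNReal.ofReal ρ := by
    rw [cond_apply (measurableSet_lt measurable_const (hZm 1)), hpos 1 one_pos le_rfl,
      Set.inter_eq_right.2 (Set.ofPred_subset_ofPred.2 fun ω (h : x < Z 1 ω) => hx.trans h),
      ENNReal.div_eq_inv_mul]
  rw [hcond, ENNReal.mul_div_cancel hρ0 ENNReal.ofReal_ne_top,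
    ENNReal.le_div_iff_mul_le (.inl hρ0) (.inl ENNReal.ofReal_ne_top), mul_comm]
  refine ⟨measure_mono_ae ?_, le_trans (mul_le_mul_right (measure_mono fun ω h => ?_) _)
    (hZ.mul_measure_exists_lt_le hrc hρ_le x)⟩
  · filter_upwards [hZ.ae_bddAbove_range hrc hρ_le hρ0] with ω hbdd (h : x < Z 1 ω)
    exact h.trans_le (le_ciSup hbdd ⟨1, by simp⟩)
  · exact exists_lt_of_lt_ciSup h

/-- **Tail bounds for the supremum of a Lévy process in terms of the positive part of the
marginal.**  Let `Z = (Z_t)_{t∈[0,1]}` be a right-continuous process with stationary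
independent increments, `Z₀ = 0`, such that `0` is regular for `(0,∞)` and
`P(Z_t > 0) = ρ` for `t ∈ (0,1]`.  Let `Z̄₁ = sup_{t∈[0,1]} Z_t` and let `S` be `Z₁`
conditioned on `{Z₁ > 0}`.  Then for every `x > 0`:
`ρ P(S > x) ≤ P(Z̄₁ > x) ≤ P(S > x)`. -/
theorem sup_tail_bounds_levy
    {Ω : Type*} [MeasureSpace Ω] [IsProbabilityMeasure (ℙ : Measure Ω)]
    (ρ : ℝ) (hρ : ρ ∈ Set.Ioc (0 : ℝ) 1)
    (Z : ℝ → Ω → ℝ)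
    (hZm : ∀ t, Measurable (Z t))
    (hZ0 : ∀ ω, Z 0 ω = 0)
    (hrc : ∀ ω t, ContinuousWithinAt (fun s => Z s ω) (Set.Ici t) t)
    -- stationary increments
    (hstat : ∀ s t : ℝ, 0 ≤ s → s ≤ t →
      Measure.map (fun ω => Z t ω - Z s ω) ℙ = Measure.map (Z (t - s)) ℙ)
    -- independent increments
    (hindep : ∀ (n : ℕ) (t : Fin (n + 1) → ℝ), Monotone t → 0 ≤ t 0 →
      iIndepFun (m := fun _ : Fin n => (inferInstance : MeasurableSpace ℝ))
        (fun i ω => Z (t i.succ) ω - Z (t i.castSucc) ω) ℙ)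
    -- 0 is regular for (0,∞)
    (hreg : ∀ᵐ ω ∂ℙ, ∀ ε > (0 : ℝ), ∃ t, 0 < t ∧ t < ε ∧ 0 < Z t ω)
    -- constant positivity probability ρ
    (hpos : ∀ t : ℝ, 0 < t → t ≤ 1 → ℙ {ω | 0 < Z t ω} = ENNReal.ofReal ρ) :
    ∀ x : ℝ, 0 < x →
      ENNReal.ofReal ρ * (ℙ[|{ω | 0 < Z 1 ω}]) {ω | x < Z 1 ω}
          ≤ ℙ {ω | x < ⨆ s : Set.Icc (0 : ℝ) 1, Z (s : ℝ) ω} ∧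
      ℙ {ω | x < ⨆ s : Set.Icc (0 : ℝ) 1, Z (s : ℝ) ω}
          ≤ (ℙ[|{ω | 0 < Z 1 ω}]) {ω | x < Z 1 ω} :=
  sup_tail_bounds_levy_general ρ hρ Z hZm hZ0 hrc hstat hindep hpos
end

section
/- Fix constants 0 < δ < d and a sequence of positive reals (Eₙ)_{n ≤ 0} defined as follows: given nonincreasing integers (χₙ)_{n≤0} with χₙ < n, and nonnegative reals (Sₖ)_{k<0}, (Uₖ)_{k<0} ∈ [0,1] with the property that for every n and every k ∈ [χ_{n−1}, χₙ), S_k ≤ e^{δ(n−k−1)}, set Eₙ = e^{(d−δ)χₙ + nδ}/(1 − e^{δ−d}) + Σ_{k=χₙ}^{n−1} e^{(k+1)d} Uₖ^{1/α} Sₖ (with α > 0 and Uₖ^{1/α} ≤ 1). Then the sequence is strictly increasing: E_{n−1} < Eₙ for all n ≤ 0. -/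
/-!
The first term of `Eₙ` is the geometric tail `Σ_{k < χₙ} e^{(d-δ)(k+1) + nδ}`, so moving its
cut-off from `χ_{n-1}` up to `χₙ` adds exactly the bound `e^{(d-δ)(k+1) + nδ}` on each summand
`e^{(k+1)d} Uₖ^{1/α} Sₖ` with `k ∈ [χ_{n-1}, χₙ)`. Hence passing from `E_{n-1}` to `Eₙ` loses
nothing in the sums, while the tail itself gains the factor `e^{δ} > 1`.
-/

open Finset Real

theorem Int.sum_Ico_sub {M : Type*} [AddCommGroup M] (f : ℤ → M) {a b : ℤ} (hab : a ≤ b) :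
    ∑ k ∈ Ico a b, (f (k + 1) - f k) = f b - f a := by
  induction b, hab using Int.leInduction with
  | base => simp
  | succ b hab ih =>
    rw [← insert_Ico_right_eq_Ico_add_one hab, sum_insert right_notMem_Ico, ih]
    abel

theorem Int.sum_Ico_le_sub_of_le_sub {M : Type*} [AddCommGroup M] [PartialOrder M]
    [IsOrderedAddMonoid M] {f g : ℤ → M} {a b : ℤ} (hab : a ≤ b)
    (h : ∀ k ∈ Ico a b, g k ≤ f (k + 1) - f k) :
    ∑ k ∈ Ico a b, g k ≤ f b - f a :=
  Int.sum_Ico_sub f hab ▸ sum_le_sum h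

theorem exp_div_one_sub_exp_neg_add_one_sub {c : ℝ} (hc : c ≠ 0) (x m : ℝ) :
    exp (c * (m + 1) + x) / (1 - exp (-c)) - exp (c * m + x) / (1 - exp (-c))
      = exp (c * (m + 1) + x) := by
  have hq : 1 - exp (-c) ≠ 0 := sub_ne_zero.2 fun h ↦ hc (by simpa using h.symm)
  have hshift : exp (c * m + x) = exp (c * (m + 1) + x) * exp (-c) := by
    rw [← exp_add]; ring_nf
  rw [hshift, div_sub_div_same, ← mul_one_sub, mul_div_cancel_right₀ _ hq]

theorem exp_mul_rpow_mul_le {d δ p n k u s : ℝ} (hp : 0 ≤ p) (hu0 : 0 ≤ u) (hu1 : u ≤ 1)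
    (hs0 : 0 ≤ s) (hs : s ≤ exp (δ * (n - k - 1))) :
    exp ((k + 1) * d) * u ^ p * s ≤ exp ((d - δ) * (k + 1) + n * δ) :=
  calc exp ((k + 1) * d) * u ^ p * s ≤ exp ((k + 1) * d) * 1 * s := by
        gcongr
        exact rpow_le_one hu0 hu1 hp
    _ ≤ exp ((k + 1) * d) * exp (δ * (n - k - 1)) := by rw [mul_one]; gcongr
    _ = exp ((d - δ) * (k + 1) + n * δ) := by rw [← exp_add]; ring_nf

theorem add_sum_Ico_lt_of_le_sub {P T : ℤ → ℝ} {a b m m' : ℤ} {r : ℝ} (hr : r < 1)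
    (hPa : 0 < P a) (hab : a ≤ b) (hbm : b ≤ m) (hmm' : m ≤ m') (hT : ∀ k, 0 ≤ T k)
    (hstep : ∀ k ∈ Ico a b, T k ≤ P (k + 1) - P k) :
    r * P a + ∑ k ∈ Ico a m, T k < P b + ∑ k ∈ Ico b m', T k := by
  have hsplit : ∑ k ∈ Ico a m, T k = ∑ k ∈ Ico a b, T k + ∑ k ∈ Ico b m, T k := by
    rw [← sum_union (Ico_disjoint_Ico_consecutive a b m), Ico_union_Ico_eq_Ico hab hbm]
  have hgrow : ∑ k ∈ Ico b m, T k ≤ ∑ k ∈ Ico b m', T k :=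
    sum_le_sum_of_subset_of_nonneg (Ico_subset_Ico_right hmm') fun k _ _ ↦ hT k
  have hdecay : r * P a < P a := mul_lt_of_lt_one_left hPa hr
  linarith [Int.sum_Ico_le_sub_of_le_sub hab hstep]

/-- **Strict monotonicity of the dominating sequence.**  Fix `0 < δ < d`, nonincreasing
integers `(χₙ)_{n≤0}` with `χₙ < n`, nonnegative `(Sₖ)`, `(Uₖ) ⊆ [0,1]` such that
`Sₖ ≤ e^{δ(n-k-1)}` for `k ∈ [χ_{n-1}, χₙ)`, and set
`Eₙ = e^{(d-δ)χₙ + nδ}/(1 - e^{δ-d}) + Σ_{k=χₙ}^{n-1} e^{(k+1)d} Uₖ^{1/α} Sₖ`.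
Then `E_{n-1} < Eₙ` for all `n ≤ 0`. -/
theorem dominating_sequence_strict_mono
    (d δ α : ℝ) (hδ : 0 < δ) (hδd : δ < d) (hα : 0 < α)
    (χ : ℤ → ℤ) (S U : ℤ → ℝ)
    (hχlt : ∀ n : ℤ, n ≤ 0 → χ n < n)
    (hχmono : ∀ n : ℤ, n ≤ 0 → χ (n - 1) ≤ χ n)
    (hS0 : ∀ k, 0 ≤ S k) (hU0 : ∀ k, 0 ≤ U k) (hU1 : ∀ k, U k ≤ 1)
    (hSbound : ∀ n : ℤ, n ≤ 0 → ∀ k : ℤ, χ (n - 1) ≤ k → k < χ n →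
      S k ≤ Real.exp (δ * ((n : ℝ) - (k : ℝ) - 1)))
    (E : ℤ → ℝ)
    (hE : ∀ n : ℤ, n ≤ 0 →
      E n = Real.exp ((d - δ) * (χ n : ℝ) + (n : ℝ) * δ) / (1 - Real.exp (δ - d))
        + ∑ k ∈ Finset.Ico (χ n) n,
            Real.exp (((k : ℝ) + 1) * d) * U k ^ (1 / α) * S k) :
    ∀ n : ℤ, n ≤ 0 → E (n - 1) < E n := by
  intro n hn
  set P : ℤ → ℝ := fun m ↦ exp ((d - δ) * m + n * δ) / (1 - exp (δ - d))
  set T : ℤ → ℝ := fun k ↦ exp ((k + 1) * d) * U k ^ (1 / α) * S k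
  have hEn : E n = P (χ n) + ∑ k ∈ Ico (χ n) n, T k := hE n hn
  have hEn' : E (n - 1) = exp (-δ) * P (χ (n - 1)) + ∑ k ∈ Ico (χ (n - 1)) (n - 1), T k := by
    rw [hE (n - 1) (by omega), mul_div_assoc', ← exp_add]
    push_cast
    ring_nf
  have hstep : ∀ k ∈ Ico (χ (n - 1)) (χ n), T k ≤ P (k + 1) - P k := fun k hk ↦ by
    obtain ⟨hak, hkb⟩ := mem_Ico.1 hk
    simp only [P, T, Int.cast_add, Int.cast_one, ← neg_sub d δ,
      exp_div_one_sub_exp_neg_add_one_sub (sub_ne_zero.2 hδd.ne')]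
    exact exp_mul_rpow_mul_le (by positivity) (hU0 k) (hU1 k) (hS0 k) (hSbound n hn k hak hkb)
  rw [hEn, hEn']
  refine add_sum_Ico_lt_of_le_sub (exp_lt_one_iff.2 (neg_neg_of_pos hδ)) ?_ (hχmono n hn)
    (by linarith [hχlt n hn]) (by omega) (fun k ↦ ?_) hstep
  · exact div_pos (exp_pos _) (sub_pos.2 (exp_lt_one_iff.2 (by linarith)))
  · exact mul_nonneg (mul_nonneg (exp_pos _).le (rpow_nonneg (hU0 k) _)) (hS0 k)
end

section
/- Let ε > 0, r₁ = 1, and suppose a real random variable Λ has a continuous density near x > 0, so that P(|Λ − x| < ε) ≤ K₁ ε for some constant K₁ and all ε ∈ (0,1]. Suppose further that approximations Λₙ with error bounds Δₙ ≥ |Λ − Λₙ| satisfy P(inf{n : Δₙ < ε} > n) ≤ K₂ ε^{−η} e^{−sn} for constants K₂, η, s > 0. Then the number of steps B(x) = inf{n : Δₙ < |Λₙ − x|} needed to determine the indicator 1{Λ > x} satisfies P(B(x) > n) ≤ K₀ e^{−sn/(1+η)} for some constant K₀ > 0 and all n ∈ ℕ, and in particular B(x) has finite exponential moments of all orders less than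 s/(1+η). -/
/-!
If the first `n` approximations all fail to separate `Λₙ` from `x`, then either some `Δₘ`
with `m < n` is below `ε`, in which case `|Λ - x| ≤ |Λ - Λₘ| + |Λₘ - x| ≤ 2Δₘ < 2ε`, or all
of them are at least `ε`. Hence `P(B(x) > n) ≤ 2K₁ε + K₂ε^{-η}e^{-sn}`, and the choice
`2ε = e^{-sn/(1+η)}` balances the two terms. Summing the resulting geometric tail bound
gives the exponential moments.
-/

open MeasureTheory ProbabilityTheory

theorem ENNReal.tsum_ofReal_exp_mul_mul_lt_top {C a l : ℝ} (hla : l < a) :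
    ∑' n : ℕ, ENNReal.ofReal (Real.exp (l * n)) * ENNReal.ofReal (C * Real.exp (-a * n)) < ⊤ := by
  have hterm : ∀ n : ℕ, ENNReal.ofReal (Real.exp (l * n)) * ENNReal.ofReal (C * Real.exp (-a * n))
      = ENNReal.ofReal C * ENNReal.ofReal (Real.exp (l - a)) ^ n := by
    intro n
    rw [← ENNReal.ofReal_mul (Real.exp_pos _).le, ← ENNReal.ofReal_pow (Real.exp_pos _).le,
      ← Real.exp_nat_mul, ← ENNReal.ofReal_mul' (Real.exp_pos _).le, mul_left_comm,
      ← Real.exp_add]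
    ring_nf
  simp_rw [hterm, ENNReal.tsum_mul_left, ENNReal.tsum_geometric]
  refine ENNReal.mul_lt_top ENNReal.ofReal_lt_top (ENNReal.inv_lt_top.2 (tsub_pos_of_lt ?_))
  exact ENNReal.ofReal_lt_one.2 (Real.exp_lt_one_iff.2 (by linarith))

/-- `N` need not be measurable: only the sets `A n ⊇ {N ≥ n}` have to be. -/
theorem lintegral_ofReal_exp_mul_lt_top_of_tail_le {α : Type*} [MeasurableSpace α]
    {μ : Measure α} (N : α → ℕ) {A : ℕ → Set α} (hA : ∀ n, MeasurableSet (A n))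
    (hNA : ∀ n ω, n ≤ N ω → ω ∈ A n) {C a l : ℝ} (hla : l < a)
    (htail : ∀ n : ℕ, μ (A n) ≤ ENNReal.ofReal (C * Real.exp (-a * n))) :
    ∫⁻ ω, ENNReal.ofReal (Real.exp (l * N ω)) ∂μ < ⊤ := by
  have hpt : ∀ ω, ENNReal.ofReal (Real.exp (l * N ω))
      ≤ ∑' n : ℕ, (A n).indicator (fun _ => ENNReal.ofReal (Real.exp (l * n))) ω := fun ω => by
    have := ENNReal.le_tsum (N ω)
      (f := fun n : ℕ => (A n).indicator (fun _ => ENNReal.ofReal (Real.exp (l * n))) ω)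
    rwa [Set.indicator_of_mem (hNA _ ω le_rfl)] at this
  calc ∫⁻ ω, ENNReal.ofReal (Real.exp (l * N ω)) ∂μ
      ≤ ∫⁻ ω, ∑' n : ℕ, (A n).indicator (fun _ => ENNReal.ofReal (Real.exp (l * n))) ω ∂μ :=
        lintegral_mono hpt
    _ = ∑' n : ℕ, ENNReal.ofReal (Real.exp (l * n)) * μ (A n) := by
        rw [lintegral_tsum fun n => (measurable_const.indicator (hA n)).aemeasurable]
        simp_rw [lintegral_indicator_const (hA _)]
    _ ≤ ∑' n : ℕ, ENNReal.ofReal (Real.exp (l * n)) * ENNReal.ofReal (C * Real.exp (-a * n)) := by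
        gcongr with n
        exact htail n
    _ < ⊤ := ENNReal.tsum_ofReal_exp_mul_mul_lt_top hla

theorem div_two_rpow_neg_mul_exp {η : ℝ} (hη : 0 < 1 + η) (c : ℝ) :
    (Real.exp (c / (1 + η)) / 2) ^ (-η) * Real.exp c = 2 ^ η * Real.exp (c / (1 + η)) := by
  rw [Real.div_rpow (Real.exp_pos _).le zero_le_two, ← Real.exp_mul,
    Real.rpow_neg zero_le_two, div_inv_eq_mul, mul_right_comm, ← Real.exp_add, mul_comm]
  congr 2
  field_simp
  ring

section Undecided

variable {Ω : Type*} [MeasurableSpace Ω] {μ : Measure Ω} {Λ : Ω → ℝ} {Λ' Δ : ℕ → Ω → ℝ}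
  {x : ℝ}

theorem measure_undecided_le_add (hΔ : ∀ n, ∀ᵐ ω ∂μ, |Λ ω - Λ' n ω| ≤ Δ n ω) (ε : ℝ) (n : ℕ) :
    μ {ω | ∀ m < n, |Λ' m ω - x| ≤ Δ m ω}
      ≤ μ {ω | |Λ ω - x| < 2 * ε} + μ {ω | ∀ m < n, ε ≤ Δ m ω} := by
  refine (measure_mono_ae ?_).trans (measure_union_le _ _)
  filter_upwards [ae_all_iff.2 hΔ] with ω hω hundecided
  by_cases hlarge : ∀ m < n, ε ≤ Δ m ω
  · exact Or.inr hlarge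
  · push Not at hlarge
    obtain ⟨m, hm, hsmall⟩ := hlarge
    have htri := abs_sub_le (Λ ω) (Λ' m ω) x
    exact Or.inl (show |Λ ω - x| < 2 * ε by linarith [hω m, hundecided m hm])

theorem measure_undecided_le_exp (hΔ : ∀ n, ∀ᵐ ω ∂μ, |Λ ω - Λ' n ω| ≤ Δ n ω)
    {K₁ K₂ η s : ℝ} (hK₁ : 0 ≤ K₁) (hK₂ : 0 ≤ K₂) (hη : 0 < 1 + η) (hs : 0 < s)
    (hdens : ∀ ε ∈ Set.Ioc (0 : ℝ) 1, μ {ω | |Λ ω - x| < ε} ≤ ENNReal.ofReal (K₁ * ε))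
    (hN : ∀ ε ∈ Set.Ioc (0 : ℝ) 1, ∀ n : ℕ,
      μ {ω | ∀ m < n, ε ≤ Δ m ω} ≤ ENNReal.ofReal (K₂ * ε ^ (-η) * Real.exp (-s * n)))
    (n : ℕ) :
    μ {ω | ∀ m < n, |Λ' m ω - x| ≤ Δ m ω}
      ≤ ENNReal.ofReal ((K₁ + K₂ * 2 ^ η) * Real.exp (-s * n / (1 + η))) := by
  set t := Real.exp (-s * n / (1 + η))
  have ht0 : 0 < t := Real.exp_pos _
  have ht1 : t ≤ 1 :=
    Real.exp_le_one_iff.2 (div_nonpos_of_nonpos_of_nonneg (by nlinarith [n.cast_nonneg (α := ℝ)])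
      (by linarith))
  calc μ {ω | ∀ m < n, |Λ' m ω - x| ≤ Δ m ω}
      ≤ μ {ω | |Λ ω - x| < 2 * (t / 2)} + μ {ω | ∀ m < n, t / 2 ≤ Δ m ω} :=
        measure_undecided_le_add hΔ (t / 2) n
    _ ≤ ENNReal.ofReal (K₁ * t) + ENNReal.ofReal (K₂ * (t / 2) ^ (-η) * Real.exp (-s * n)) := by
        rw [mul_div_cancel₀ t two_ne_zero]
        gcongr
        · exact hdens t ⟨ht0, ht1⟩
        · exact hN (t / 2) ⟨by positivity, by linarith⟩ n
    _ = ENNReal.ofReal (K₁ * t) + ENNReal.ofReal (K₂ * 2 ^ η * t) := by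
        rw [mul_assoc K₂, div_two_rpow_neg_mul_exp (by linarith), mul_assoc]
    _ = ENNReal.ofReal ((K₁ + K₂ * 2 ^ η) * t) := by
        rw [add_mul, ENNReal.ofReal_add (by positivity) (by positivity)]

end Undecided

theorem indicator_exact_simulation_complexity_general
    {Ω : Type*} [MeasureSpace Ω] [IsProbabilityMeasure (ℙ : Measure Ω)]
    (x : ℝ)
    (Λ : Ω → ℝ) (Λ' : ℕ → Ω → ℝ) (Δ : ℕ → Ω → ℝ)
    (hΛ'm : ∀ n, Measurable (Λ' n)) (hΔm : ∀ n, Measurable (Δ n))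
    (hΔ : ∀ n, ∀ᵐ ω ∂ℙ, |Λ ω - Λ' n ω| ≤ Δ n ω)
    (K₁ K₂ η s : ℝ) (hK₁ : 0 < K₁) (hK₂ : 0 < K₂) (hη : 0 < η) (hs : 0 < s)
    (hdens : ∀ ε : ℝ, ε ∈ Set.Ioc (0 : ℝ) 1 →
      ℙ {ω | |Λ ω - x| < ε} ≤ ENNReal.ofReal (K₁ * ε))
    (hN : ∀ ε : ℝ, ε ∈ Set.Ioc (0 : ℝ) 1 → ∀ n : ℕ,
      ℙ {ω | ∀ m < n, ε ≤ Δ m ω} ≤ ENNReal.ofReal (K₂ * ε ^ (-η) * Real.exp (-s * n))) :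
    ∃ K₀ : ℝ, 0 < K₀ ∧
      (∀ n : ℕ, ℙ {ω | ∀ m < n, |Λ' m ω - x| ≤ Δ m ω}
        ≤ ENNReal.ofReal (K₀ * Real.exp (-s * n / (1 + η)))) ∧
      (∀ l : ℝ, 0 < l → l < s / (1 + η) →
        ∫⁻ ω, ENNReal.ofReal
            (Real.exp (l * (sInf {n : ℕ | Δ n ω < |Λ' n ω - x|} : ℕ))) ∂ℙ < ⊤) := by
  have htail := measure_undecided_le_exp hΔ hK₁.le hK₂.le (by linarith) hs hdens hN
  refine ⟨K₁ + K₂ * 2 ^ η, by positivity, htail, fun l _ hl => ?_⟩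
  have hmeas : ∀ n, MeasurableSet {ω | ∀ m < n, |Λ' m ω - x| ≤ Δ m ω} := fun n => by
    simp only [Set.ofPred_forall]
    exact .iInter fun m => .iInter fun _ =>
      measurableSet_le ((hΛ'm m).sub measurable_const).abs (hΔm m)
  refine lintegral_ofReal_exp_mul_lt_top_of_tail_le (C := K₁ + K₂ * 2 ^ η) _ hmeas
    (fun n ω hn m hm => not_lt.1 (Nat.notMem_of_lt_sInf (hm.trans_le hn))) hl fun n => ?_
  convert htail n using 4
  ring

/-- **Complexity of exact simulation of the indicator `1{Λ > x}`.**  Let `Λ` be a real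
random variable with `P(|Λ - x| < ε) ≤ K₁ ε` for `ε ∈ (0,1]` and some `x > 0`, and let
`Λₙ` be approximations with error bounds `Δₙ ≥ |Λ - Λₙ|` satisfying
`P(N(ε) > n) ≤ K₂ ε^{-η} e^{-sn}` where `{N(ε) > n} = {∀ m < n, Δₘ ≥ ε}`.  Then the
number of steps `B(x) = inf{n : Δₙ < |Λₙ - x|}` needed to determine `1{Λ > x}` satisfies
`P(B(x) > n) ≤ K₀ e^{-sn/(1+η)}` for some `K₀ > 0`, and in particular `B(x)` has finite
exponential moments of all orders less than `s/(1+η)`. -/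
theorem indicator_exact_simulation_complexity
    {Ω : Type*} [MeasureSpace Ω] [IsProbabilityMeasure (ℙ : Measure Ω)]
    (x : ℝ) (hx : 0 < x)
    (Λ : Ω → ℝ) (Λ' : ℕ → Ω → ℝ) (Δ : ℕ → Ω → ℝ)
    (hΛm : Measurable Λ) (hΛ'm : ∀ n, Measurable (Λ' n)) (hΔm : ∀ n, Measurable (Δ n))
    (hΔ0 : ∀ n ω, 0 ≤ Δ n ω)
    (hΔ : ∀ n, ∀ᵐ ω ∂ℙ, |Λ ω - Λ' n ω| ≤ Δ n ω)
    (K₁ K₂ η s : ℝ) (hK₁ : 0 < K₁) (hK₂ : 0 < K₂) (hη : 0 < η) (hs : 0 < s)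
    (hdens : ∀ ε : ℝ, ε ∈ Set.Ioc (0 : ℝ) 1 →
      ℙ {ω | |Λ ω - x| < ε} ≤ ENNReal.ofReal (K₁ * ε))
    (hN : ∀ ε : ℝ, ε ∈ Set.Ioc (0 : ℝ) 1 → ∀ n : ℕ,
      ℙ {ω | ∀ m < n, ε ≤ Δ m ω} ≤ ENNReal.ofReal (K₂ * ε ^ (-η) * Real.exp (-s * n))) :
    ∃ K₀ : ℝ, 0 < K₀ ∧
      (∀ n : ℕ, ℙ {ω | ∀ m < n, |Λ' m ω - x| ≤ Δ m ω}
        ≤ ENNReal.ofReal (K₀ * Real.exp (-s * n / (1 + η)))) ∧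
      (∀ l : ℝ, 0 < l → l < s / (1 + η) →
        ∫⁻ ω, ENNReal.ofReal
            (Real.exp (l * (sInf {n : ℕ | Δ n ω < |Λ' n ω - x|} : ℕ))) ∂ℙ < ⊤) :=
  indicator_exact_simulation_complexity_general x Λ Λ' Δ hΛ'm hΔm hΔ K₁ K₂ η s hK₁ hK₂ hη hs hdens
    hN
end
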